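/- arXiv:0903.1928 — 6 statements merged into one kernel-verified Lean document; each statement's English description precedes it below -/
import Mathlib

section
/- (q-analogue of Nanjundiah's identity) For all integers m, p, μ, ν, one has Σ_{r∈ℤ} q^{(m−μ+ν−r)(p−r)} G^r_{m−μ+ν}(q) G^{p−r}_{p+μ−ν}(q) G^{m+p}_{μ+r}(q) = G^m_μ(q) · G^p_ν(q), where the sum has only finitely many nonzero terms. -/
/-- The Gaussian (q-binomial) coefficient `G^l_a(q)`. -/
noncomputable def gaussG (q : ℚ) (l a : ℤ) : ℚ :=
  if l < 0 then 0
  else (∏ i ∈ Finset.range l.toNat, (q ^ (a - (i : ℤ)) - 1)) /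
       (∏ i ∈ Finset.range l.toNat, (q ^ (l - (i : ℤ)) - 1))

noncomputable def gN (q : ℚ) (l : ℕ) (a : ℤ) : ℚ :=
  ∏ i ∈ Finset.range l, (q ^ (a - (i : ℤ)) - 1)

noncomputable def gD (q : ℚ) (l : ℕ) : ℚ :=
  ∏ i ∈ Finset.range l, (q ^ ((l : ℤ) - (i : ℤ)) - 1)

noncomputable def G (q : ℚ) (l : ℕ) (a : ℤ) : ℚ := gN q l a / gD q l

section basics
variable {q : ℚ} (hq : 2 ≤ q)

include hq in
lemma hq1 : (1:ℚ) < q := lt_of_lt_of_le one_lt_two hq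

include hq in
lemma hq0 : q ≠ 0 := by have := hq1 hq; positivity

include hq in
lemma zpow_sub_one_ne (j : ℤ) (hj : 0 < j) : q ^ j - 1 ≠ 0 := by
  have : (1:ℚ) < q ^ j := one_lt_zpow₀ (hq1 hq) hj
  linarith

lemma gD_succ (l : ℕ) : gD q (l + 1) = gD q l * (q ^ ((l:ℤ) + 1) - 1) := by
  unfold gD
  rw [Finset.prod_range_succ']
  congr 1
  · exact Finset.prod_congr rfl fun i _ => by push_cast; ring_nf

include hq in
lemma gD_ne_zero (l : ℕ) : gD q l ≠ 0 := by
  induction l with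
  | zero => simp [gD]
  | succ n ih =>
      rw [gD_succ]
      exact mul_ne_zero ih (zpow_sub_one_ne hq _ (by positivity))

lemma gN_succ (l : ℕ) (a : ℤ) : gN q (l+1) a = gN q l a * (q ^ (a - l) - 1) :=
  Finset.prod_range_succ _ _

lemma gN_succ' (l : ℕ) (a : ℤ) : gN q (l+1) a = (q ^ a - 1) * gN q l (a - 1) := by
  unfold gN
  rw [Finset.prod_range_succ']
  rw [mul_comm]
  congr 1
  · simp
  · exact Finset.prod_congr rfl fun i _ => by push_cast; ring_nf

lemma gN_add (s t : ℕ) (a : ℤ) : gN q (s + t) a = gN q s a * gN q t (a - s) := by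
  unfold gN
  rw [Finset.prod_range_add]
  congr 1
  exact Finset.prod_congr rfl fun i _ => by push_cast; ring_nf

lemma gD_eq_gN (l : ℕ) : gD q l = gN q l l := rfl

lemma G_zero (a : ℤ) : G q 0 a = 1 := by simp [G, gN, gD]

lemma G_eq_zero (l : ℕ) (a : ℤ) (h0 : 0 ≤ a) (h1 : a < l) : G q l a = 0 := by
  have : gN q l a = 0 := by
    apply Finset.prod_eq_zero (i := a.toNat)
    · simp only [Finset.mem_range]; omega
    · rw [Int.toNat_of_nonneg h0]; simp
  simp [G, this]

include hq in
lemma pascal (n : ℤ) (k : ℕ) :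
    G q (k+1) (n+1) = q ^ ((k:ℤ)+1) * G q (k+1) n + G q k n := by
  have hd : gD q k ≠ 0 := gD_ne_zero hq k
  have hy : q ^ (k:ℤ) ≠ 0 := zpow_ne_zero _ (hq0 hq)
  have he : q ^ (k:ℤ) * q - 1 ≠ 0 := by
    have := zpow_sub_one_ne hq ((k:ℤ)+1) (by positivity)
    rwa [zpow_add₀ (hq0 hq), zpow_one] at this
  have h1 : gN q (k+1) (n+1) = (q ^ n * q - 1) * gN q k n := by
    rw [gN_succ', zpow_add₀ (hq0 hq), zpow_one, add_sub_cancel_right]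
  have h2 : gN q (k+1) n = gN q k n * (q ^ n / q ^ (k:ℤ) - 1) := by
    rw [gN_succ, zpow_sub₀ (hq0 hq)]
  have h3 : gD q (k+1) = gD q k * (q ^ (k:ℤ) * q - 1) := by
    rw [gD_succ, zpow_add₀ (hq0 hq), zpow_one]
  have h4 : q ^ ((k:ℤ)+1) = q ^ (k:ℤ) * q := by
    rw [zpow_add₀ (hq0 hq), zpow_one]
  unfold G
  rw [h1, h2, h3, h4]
  generalize gN q k n = A at *
  generalize hgd : gD q k = d at *
  generalize hx : q ^ n = x at *
  generalize hgy : q ^ (k:ℤ) = y at *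
  field_simp
  have he' : (-1 + q * y) ≠ 0 := fun h => he (by linarith)
  linear_combination A * mul_inv_cancel₀ he'
end basics

noncomputable def gS (q : ℚ) (a b : ℤ) (k : ℕ) : ℚ :=
  ∑ j ∈ Finset.range (k+1), q ^ ((a - (j:ℤ)) * ((k:ℤ) - (j:ℤ))) * G q j a * G q (k - j) b

section vdm
variable {q : ℚ} (hq : 2 ≤ q)

include hq in
lemma Srec (a b : ℤ) (k : ℕ) :
    gS q (a+1) b (k+1) = q ^ ((k:ℤ)+1) * gS q a b (k+1) + gS q a b k := by
  have hq0' := hq0 hq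
  have key : ∀ j ∈ Finset.range (k+1),
      q ^ ((a + 1 - ((j+1:ℕ):ℤ)) * (((k+1:ℕ):ℤ) - ((j+1:ℕ):ℤ))) * G q (j+1) (a+1) * G q (k+1 - (j+1)) b
      = q ^ ((k:ℤ)+1) * (q ^ ((a - ((j+1:ℕ):ℤ)) * (((k+1:ℕ):ℤ) - ((j+1:ℕ):ℤ))) * G q (j+1) a * G q (k+1-(j+1)) b)
        + q ^ ((a - (j:ℤ)) * ((k:ℤ) - (j:ℤ))) * G q j a * G q (k - j) b := by
    intro j hj
    have hsub : k + 1 - (j+1) = k - j := by omega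
    have hz2 : (a + 1 - ((j+1:ℕ):ℤ)) * (((k+1:ℕ):ℤ) - ((j+1:ℕ):ℤ))
        = (a - (j:ℤ)) * ((k:ℤ) - (j:ℤ)) := by push_cast; ring
    rw [hsub, hz2, pascal hq a j]
    have hz3 : q ^ ((a - (j:ℤ)) * ((k:ℤ) - (j:ℤ))) * q ^ ((j:ℤ)+1)
        = q ^ ((k:ℤ)+1) * q ^ ((a - ((j+1:ℕ):ℤ)) * (((k+1:ℕ):ℤ) - ((j+1:ℕ):ℤ))) := by
      rw [← zpow_add₀ hq0', ← zpow_add₀ hq0']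
      congr 1
      push_cast; ring
    linear_combination (G q (j+1) a * G q (k - j) b) * hz3
  unfold gS
  rw [Finset.sum_range_succ'
      (fun j => q ^ ((a + 1 - (j:ℤ)) * (((k+1:ℕ):ℤ) - (j:ℤ))) * G q j (a+1) * G q (k+1 - j) b) (k+1),
    Finset.sum_range_succ'
      (fun j => q ^ ((a - (j:ℤ)) * (((k+1:ℕ):ℤ) - (j:ℤ))) * G q j a * G q (k+1 - j) b) (k+1),
    Finset.sum_congr rfl key, Finset.sum_add_distrib, ← Finset.mul_sum]
  have hz4 : q ^ ((a + 1 - ((0:ℕ):ℤ)) * (((k+1:ℕ):ℤ) - ((0:ℕ):ℤ)))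
      = q ^ ((k:ℤ)+1) * q ^ ((a - ((0:ℕ):ℤ)) * (((k+1:ℕ):ℤ) - ((0:ℕ):ℤ))) := by
    rw [← zpow_add₀ hq0']
    congr 1
    push_cast; ring
  rw [hz4]
  simp only [G_zero]
  ring

include hq in
lemma vandermonde (b : ℤ) : ∀ (a : ℤ) (k : ℕ), gS q a b k = G q k (a + b) := by
  intro a
  induction a using Int.induction_on with
  | zero =>
      intro k
      unfold gS
      rw [Finset.sum_eq_single_of_mem 0 (Finset.mem_range.mpr (Nat.succ_pos k))]
      · simp [G_zero]
      · intro j _ hj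
        rw [G_eq_zero j 0 le_rfl (by exact_mod_cast Nat.pos_of_ne_zero hj)]
        ring
  | succ a ih =>
      intro k
      cases k with
      | zero => simp [gS, G_zero]
      | succ k =>
          rw [Srec hq, ih, ih, show (a:ℤ) + 1 + b = (a + b) + 1 by ring, pascal hq]
  | pred a ih =>
      intro k
      induction k with
      | zero => simp [gS, G_zero]
      | succ k ihk =>
          have h := Srec hq (-(a:ℤ)-1) b k
          rw [show (-(a:ℤ)-1+1) = -(a:ℤ) by ring, ih, ihk] at h
          have hp' := pascal hq (-(a:ℤ)-1+b) k
          rw [show (-(a:ℤ)-1+b+1) = -(a:ℤ)+b by ring] at hp'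
          have hz : (q ^ ((k:ℤ)+1)) ≠ 0 := zpow_ne_zero _ (hq0 hq)
          have := sub_eq_zero.mpr (h.symm.trans hp')
          have h2 : q ^ ((k:ℤ)+1) * (gS q (-(a:ℤ)-1) b (k+1) - G q (k+1) (-(a:ℤ)-1+b)) = 0 := by
            ring_nf
            ring_nf at this
            linarith [this]
          rcases mul_eq_zero.mp h2 with h3 | h3
          · exact absurd h3 hz
          · have := sub_eq_zero.mp h3
            exact this
end vdm

section more
variable {q : ℚ} (hq : 2 ≤ q)

lemma gaussG_natCast (l : ℕ) (a : ℤ) : gaussG q (l:ℤ) a = G q l a := by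
  rw [gaussG, if_neg (by omega)]
  simp [G, gN, gD]

lemma gaussG_of_neg (l a : ℤ) (h : l < 0) : gaussG q l a = 0 := if_pos h

lemma gaussG_nonneg_eq (l a : ℤ) (hl : 0 ≤ l) : gaussG q l a = G q l.toNat a := by
  obtain ⟨n, rfl⟩ := Int.eq_ofNat_of_zero_le hl
  rw [gaussG_natCast]
  simp

include hq in
lemma gN_ne_zero (s : ℕ) (r : ℤ) (hr : (s:ℤ) ≤ r) : gN q s r ≠ 0 := by
  apply Finset.prod_ne_zero_iff.mpr
  intro i hi
  simp only [Finset.mem_range] at hi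
  exact zpow_sub_one_ne hq _ (by omega)

include hq in
lemma gaussG_eq_zero (l a : ℤ) (h0 : 0 ≤ a) (h1 : a < l) : gaussG q l a = 0 := by
  rw [gaussG_nonneg_eq _ _ (by omega)]
  exact G_eq_zero _ _ h0 (by omega)

include hq in
lemma G_symm_nat (n k : ℕ) (hk : k ≤ n) : G q k (n:ℤ) = G q (n - k) (n:ℤ) := by
  have h1 : gN q n (n:ℤ) = gN q k (n:ℤ) * gN q (n - k) ((n:ℤ) - k) := by
    rw [← gN_add]
    congr 1
    omega
  have h2 : gN q n (n:ℤ) = gN q (n - k) (n:ℤ) * gN q k ((n:ℤ) - ((n:ℤ) - k)) := by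
    rw [show (n:ℤ) - ((n:ℤ) - k) = (n:ℤ) - ((n-k:ℕ):ℤ) by push_cast [hk]; ring, ← gN_add]
    congr 1
    omega
  have h3 : gD q (n - k) = gN q (n - k) ((n:ℤ) - k) := by
    rw [gD_eq_gN]
    congr 1
    push_cast [hk]; ring
  have h4 : gD q k = gN q k ((n:ℤ) - ((n:ℤ) - k)) := by
    rw [gD_eq_gN]
    congr 1
    push_cast; ring
  unfold G
  rw [div_eq_div_iff (gD_ne_zero hq _) (gD_ne_zero hq _), h3, h4, ← h1, ← h2]

include hq in
lemma gauss_symm (n : ℕ) (k : ℤ) : gaussG q k (n:ℤ) = gaussG q ((n:ℤ) - k) (n:ℤ) := by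
  rcases lt_or_ge k 0 with h | h
  · rw [gaussG_of_neg _ _ h, gaussG_eq_zero hq _ _ (by positivity) (by omega)]
  rcases le_or_gt k n with h2 | h2
  · rw [gaussG_nonneg_eq _ _ h, gaussG_nonneg_eq _ _ (by omega)]
    rw [show ((n:ℤ) - k).toNat = n - k.toNat by omega]
    exact G_symm_nat hq n k.toNat (by omega)
  · rw [gaussG_eq_zero hq _ _ (by positivity) h2, gaussG_of_neg _ _ (by omega)]

include hq in
lemma trinomial (a : ℤ) (r s : ℕ) :
    G q r a * G q s (r:ℤ) = G q s a * gaussG q ((r:ℤ) - s) (a - s) := by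
  rcases le_or_gt s r with h | h
  · have hc : ((r - s : ℕ):ℤ) = (r:ℤ) - s := by push_cast [h]; ring
    rw [show ((r:ℤ) - s) = ((r - s:ℕ):ℤ) from hc.symm, gaussG_natCast]
    have f1 : gN q r a = gN q s a * gN q (r-s) (a - s) := by
      rw [← gN_add]; congr 1; omega
    have f2 : gD q r = gN q s (r:ℤ) * gN q (r-s) ((r:ℤ) - s) := by
      rw [gD_eq_gN, ← gN_add]; congr 1; omega
    have f3 : gD q (r-s) = gN q (r-s) ((r:ℤ) - s) := by
      rw [gD_eq_gN, hc]
    have hC : gN q s (r:ℤ) ≠ 0 := gN_ne_zero hq s r (by exact_mod_cast h)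
    have hE : gN q (r-s) ((r:ℤ) - s) ≠ 0 := by rw [← f3]; exact gD_ne_zero hq _
    have hDs : gD q s ≠ 0 := gD_ne_zero hq s
    unfold G
    rw [f1, f2, f3]
    field_simp
  · rw [G_eq_zero s (r:ℤ) (by positivity) (by exact_mod_cast h),
      gaussG_of_neg _ _ (by omega)]
    ring

include hq in
lemma vdm_shifted (a b : ℤ) (s k : ℕ) :
    ∑ r ∈ Finset.range (k+1),
        q ^ ((a - ((r:ℤ) - s)) * ((k:ℤ) - r)) * gaussG q ((r:ℤ) - s) a * G q (k - r) b
      = gaussG q ((k:ℤ) - s) (a + b) := by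
  rcases le_or_gt s k with h | h
  · rw [show ((k:ℤ) - s) = ((k - s:ℕ):ℤ) by push_cast [h]; ring, gaussG_natCast,
      ← vandermonde hq b a (k - s)]
    rw [show k + 1 = s + (k - s + 1) by omega, Finset.sum_range_add]
    have hz : ∀ r ∈ Finset.range s,
        q ^ ((a - ((r:ℤ) - s)) * ((k:ℤ) - r)) * gaussG q ((r:ℤ) - s) a * G q (k - r) b = 0 := by
      intro r hr
      simp only [Finset.mem_range] at hr
      rw [gaussG_of_neg _ _ (by omega)]
      ring
    rw [Finset.sum_congr rfl hz, Finset.sum_const_zero, zero_add]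
    apply Finset.sum_congr rfl
    intro t ht
    simp only [Finset.mem_range] at ht
    have e1 : ((s + t:ℕ):ℤ) - s = (t:ℤ) := by push_cast; ring
    rw [e1, gaussG_natCast]
    have e2 : k - (s + t) = (k - s) - t := by omega
    have e3 : (a - (t:ℤ)) * ((k:ℤ) - ((s+t:ℕ):ℤ)) = (a - (t:ℤ)) * (((k-s:ℕ):ℤ) - (t:ℤ)) := by
      push_cast [h]; ring
    rw [e2, e3]
  · rw [gaussG_of_neg _ _ (by omega)]
    apply Finset.sum_eq_zero
    intro r hr
    simp only [Finset.mem_range] at hr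
    rw [gaussG_of_neg _ _ (by omega)]
    ring
end more

theorem gaussG_q_nanjundiah (q : ℚ) (hq : 2 ≤ q) (m p μ ν : ℤ) :
    (Function.support fun r : ℤ =>
        q ^ ((m - μ + ν - r) * (p - r)) * gaussG q r (m - μ + ν) *
          gaussG q (p - r) (p + μ - ν) * gaussG q (m + p) (μ + r)).Finite ∧
      (∑ᶠ r : ℤ, q ^ ((m - μ + ν - r) * (p - r)) * gaussG q r (m - μ + ν) *
          gaussG q (p - r) (p + μ - ν) * gaussG q (m + p) (μ + r)) =
        gaussG q m μ * gaussG q p ν := by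
  have hsupp : (Function.support fun r : ℤ =>
      q ^ ((m - μ + ν - r) * (p - r)) * gaussG q r (m - μ + ν) *
        gaussG q (p - r) (p + μ - ν) * gaussG q (m + p) (μ + r)) ⊆
      ↑(Finset.Icc (0:ℤ) p) := by
    intro r hr
    simp only [Function.mem_support, ne_eq] at hr
    simp only [Finset.coe_Icc, Set.mem_Icc]
    constructor
    · by_contra h
      exact hr (by rw [gaussG_of_neg _ _ (by omega : r < 0)]; ring)
    · by_contra h
      exact hr (by rw [gaussG_of_neg _ _ (by omega : p - r < 0)]; ring)
  refine ⟨Set.Finite.subset (Finset.finite_toSet _) hsupp, ?_⟩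
  rw [finsum_eq_sum_of_support_subset _ hsupp]
  rcases lt_or_ge p 0 with hp | hp
  · rw [Finset.Icc_eq_empty (by omega), Finset.sum_empty,
      gaussG_of_neg _ _ hp, mul_zero]
  rcases lt_or_ge (m + p) 0 with hmp | hmp
  · rw [Finset.sum_eq_zero (fun r _ => by rw [gaussG_of_neg _ _ hmp]; ring),
      gaussG_of_neg _ _ (by omega), zero_mul]
  obtain ⟨P, rfl⟩ : ∃ P : ℕ, p = (P:ℤ) := ⟨p.toNat, by omega⟩
  obtain ⟨K, hK⟩ : ∃ K : ℕ, m + (P:ℤ) = (K:ℤ) := ⟨(m + P).toNat, by omega⟩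
  have hmap : Finset.Icc (0:ℤ) (P:ℤ)
      = (Finset.range (P+1)).map ⟨Nat.cast, Nat.cast_injective⟩ := by
    ext x
    simp only [Finset.mem_Icc, Finset.mem_map, Finset.mem_range,
      Function.Embedding.coeFn_mk]
    constructor
    · rintro ⟨h1, h2⟩; exact ⟨x.toNat, by omega, by omega⟩
    · rintro ⟨n, hn, rfl⟩; constructor <;> omega
  rw [hmap, Finset.sum_map]
  simp only [Function.Embedding.coeFn_mk]
  calc
    ∑ r ∈ Finset.range (P+1),
        q ^ ((m - μ + ν - (r:ℤ)) * ((P:ℤ) - r)) * gaussG q r (m - μ + ν) *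
          gaussG q ((P:ℤ) - r) ((P:ℤ) + μ - ν) * gaussG q (m + (P:ℤ)) (μ + r)
      = ∑ r ∈ Finset.range (P+1), ∑ j ∈ Finset.range (K+1),
          (q ^ ((m - μ + ν - (r:ℤ)) * ((P:ℤ) - r)) * G q r (m - μ + ν) *
            G q (P - r) ((P:ℤ) + μ - ν)) *
          (q ^ ((μ - (j:ℤ)) * ((K:ℤ) - j)) * G q j μ * G q (K - j) (r:ℤ)) := by
        apply Finset.sum_congr rfl
        intro r hr
        simp only [Finset.mem_range] at hr
        rw [gaussG_natCast,
          show gaussG q ((P:ℤ) - r) ((P:ℤ) + μ - ν) = G q (P - r) ((P:ℤ) + μ - ν) by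
            rw [show ((P:ℤ) - r) = ((P - r:ℕ):ℤ) by omega, gaussG_natCast],
          show gaussG q (m + (P:ℤ)) (μ + r) = G q K (μ + (r:ℤ)) by
            rw [show (m + (P:ℤ)) = ((K:ℕ):ℤ) by omega, gaussG_natCast],
          ← vandermonde hq (r:ℤ) μ K]
        unfold gS
        rw [Finset.mul_sum]
    _ = ∑ j ∈ Finset.range (K+1), ∑ r ∈ Finset.range (P+1),
          (q ^ ((m - μ + ν - (r:ℤ)) * ((P:ℤ) - r)) * G q r (m - μ + ν) *
            G q (P - r) ((P:ℤ) + μ - ν)) *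
          (q ^ ((μ - (j:ℤ)) * ((K:ℤ) - j)) * G q j μ * G q (K - j) (r:ℤ)) :=
        Finset.sum_comm
    _ = ∑ j ∈ Finset.range (K+1),
          (q ^ ((μ - (j:ℤ)) * ((K:ℤ) - j)) * G q j μ * G q (K - j) (m - μ + ν)) *
            gaussG q ((j:ℤ) - m) (j:ℤ) := by
        apply Finset.sum_congr rfl
        intro j hj
        simp only [Finset.mem_range] at hj
        have step : ∀ r ∈ Finset.range (P+1),
            (q ^ ((m - μ + ν - (r:ℤ)) * ((P:ℤ) - r)) * G q r (m - μ + ν) *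
              G q (P - r) ((P:ℤ) + μ - ν)) *
            (q ^ ((μ - (j:ℤ)) * ((K:ℤ) - j)) * G q j μ * G q (K - j) (r:ℤ))
            = (q ^ ((μ - (j:ℤ)) * ((K:ℤ) - j)) * G q j μ * G q (K - j) (m - μ + ν)) *
              (q ^ (((m - μ + ν - ((K - j:ℕ):ℤ)) - ((r:ℤ) - ((K - j:ℕ):ℤ))) * ((P:ℤ) - r)) *
                gaussG q ((r:ℤ) - ((K - j:ℕ):ℤ)) ((m - μ + ν) - ((K - j:ℕ):ℤ)) *
                G q (P - r) ((P:ℤ) + μ - ν)) := by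
          intro r hr
          have tri := trinomial hq (m - μ + ν) r (K - j)
          have eexp : ((m - μ + ν - ((K - j:ℕ):ℤ)) - ((r:ℤ) - ((K - j:ℕ):ℤ))) * ((P:ℤ) - r)
              = (m - μ + ν - (r:ℤ)) * ((P:ℤ) - r) := by ring
          rw [eexp]
          linear_combination (q ^ ((m - μ + ν - (r:ℤ)) * ((P:ℤ) - r)) *
            G q (P - r) ((P:ℤ) + μ - ν) * q ^ ((μ - (j:ℤ)) * ((K:ℤ) - j)) * G q j μ) * tri
        rw [Finset.sum_congr rfl step, ← Finset.mul_sum,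
          vdm_shifted hq ((m - μ + ν) - ((K - j:ℕ):ℤ)) ((P:ℤ) + μ - ν) (K - j) P,
          show ((P:ℤ) - ((K - j:ℕ):ℤ)) = ((j:ℤ) - m) by omega,
          show ((m - μ + ν) - ((K - j:ℕ):ℤ) + ((P:ℤ) + μ - ν)) = (j:ℤ) by omega]
    _ = ∑ j ∈ Finset.range (K+1),
          (q ^ ((μ - (j:ℤ)) * ((K:ℤ) - j)) * G q j μ * G q (K - j) (m - μ + ν)) *
            gaussG q m (j:ℤ) := by
        apply Finset.sum_congr rfl
        intro j hj
        rw [gauss_symm hq j ((j:ℤ) - m), show ((j:ℤ) - ((j:ℤ) - m)) = m by ring]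
    _ = gaussG q m μ * gaussG q (P:ℤ) ν := by
        rcases lt_or_ge m 0 with hm | hm
        · rw [Finset.sum_eq_zero (fun j _ => by rw [gaussG_of_neg _ _ hm]; ring),
            gaussG_of_neg _ _ hm, zero_mul]
        obtain ⟨M, rfl⟩ : ∃ M : ℕ, m = (M:ℤ) := ⟨m.toNat, by omega⟩
        have step2 : ∀ j ∈ Finset.range (K+1),
            (q ^ ((μ - (j:ℤ)) * ((K:ℤ) - j)) * G q j μ * G q (K - j) ((M:ℤ) - μ + ν)) *
              gaussG q (M:ℤ) (j:ℤ)
            = G q M μ * (q ^ (((μ - (M:ℤ)) - ((j:ℤ) - (M:ℤ))) * ((K:ℤ) - j)) *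
                gaussG q ((j:ℤ) - (M:ℤ)) (μ - (M:ℤ)) * G q (K - j) ((M:ℤ) - μ + ν)) := by
          intro j hj
          rw [gaussG_natCast]
          have tri2 := trinomial hq μ j M
          have eexp2 : ((μ - (M:ℤ)) - ((j:ℤ) - (M:ℤ))) * ((K:ℤ) - j)
              = (μ - (j:ℤ)) * ((K:ℤ) - j) := by ring
          rw [eexp2]
          linear_combination (q ^ ((μ - (j:ℤ)) * ((K:ℤ) - j)) *
            G q (K - j) ((M:ℤ) - μ + ν)) * tri2
        rw [Finset.sum_congr rfl step2, ← Finset.mul_sum,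
          vdm_shifted hq (μ - (M:ℤ)) ((M:ℤ) - μ + ν) M K,
          show ((K:ℤ) - (M:ℤ)) = ((P:ℕ):ℤ) by omega,
          show (μ - (M:ℤ) + ((M:ℤ) - μ + ν)) = ν by ring,
          gaussG_natCast, gaussG_natCast]
end

section
/- (Nanjundiah's identity, classical case) For all integers m, p, μ, ν, one has Σ_{r∈ℤ} C(m−μ+ν, r) · C(p+μ−ν, p−r) · C(μ+r, m+p) = C(μ, m) · C(ν, p), where C(a, l) denotes the binomial coefficient (interpreted as 0 when l < 0 or 0 ≤ a < l, and extended for negative a by the usual product formula), and the sum has only finitely many nonzero terms. -/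
/-- The generalized binomial coefficient `C(a, l) = a(a-1)⋯(a-l+1)/l!` for integers `a`
and `l ≥ 0`, with `C(a, l) = 0` for `l < 0`. -/
noncomputable def genBinom (a l : ℤ) : ℚ :=
  if l < 0 then 0
  else (∏ i ∈ Finset.range l.toNat, ((a : ℚ) - (i : ℤ))) / (l.toNat.factorial : ℚ)

lemma genBinom_of_neg {a l : ℤ} (h : l < 0) : genBinom a l = 0 := if_pos h

lemma genBinom_zero (a : ℤ) : genBinom a 0 = 1 := by
  simp [genBinom]

lemma genBinom_eq_zero_of_lt {a l : ℤ} (h0 : 0 ≤ a) (h : a < l) : genBinom a l = 0 := by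
  rw [genBinom, if_neg (by omega)]
  apply div_eq_zero_iff.mpr
  left
  apply Finset.prod_eq_zero (i := a.toNat) (by simp [Finset.mem_range]; omega)
  have : ((a.toNat : ℤ) : ℚ) = (a : ℚ) := by
    have : (a.toNat : ℤ) = a := Int.toNat_of_nonneg h0
    rw [this]
  rw [this]; ring

lemma genBinom_succ (a l : ℤ) : genBinom (a + 1) l = genBinom a l + genBinom a (l - 1) := by
  rcases lt_trichotomy l 0 with h | h | h
  · rw [genBinom_of_neg h, genBinom_of_neg h, genBinom_of_neg (by omega)]; norm_num
  · subst h
    rw [genBinom_zero, genBinom_zero, genBinom_of_neg (by norm_num)]; norm_num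
  · have hl1 : ¬ l < 0 := by omega
    have hl2 : ¬ l - 1 < 0 := by omega
    have hl : l.toNat = (l - 1).toNat + 1 := by omega
    set k := (l - 1).toNat with hk
    rw [genBinom, genBinom, genBinom, if_neg hl1, if_neg hl1, if_neg hl2, hl, ← hk]
    have h1 : ∏ i ∈ Finset.range (k + 1), (((a + 1 : ℤ) : ℚ) - ((i : ℤ) : ℚ)) =
        ((a : ℚ) + 1) * ∏ i ∈ Finset.range k, ((a : ℚ) - ((i : ℤ) : ℚ)) := by
      rw [Finset.prod_range_succ']
      have : ∀ i ∈ Finset.range k, (((a + 1 : ℤ) : ℚ) - (((i + 1 : ℕ) : ℤ) : ℚ)) =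
          ((a : ℚ) - ((i : ℤ) : ℚ)) := by intro i _; push_cast; ring
      rw [Finset.prod_congr rfl this]
      push_cast; ring
    have h2 : ∏ i ∈ Finset.range (k + 1), ((a : ℚ) - ((i : ℤ) : ℚ)) =
        (∏ i ∈ Finset.range k, ((a : ℚ) - ((i : ℤ) : ℚ))) * ((a : ℚ) - k) := by
      rw [Finset.prod_range_succ]; push_cast; ring
    rw [h1, h2, Nat.factorial_succ]
    have hfk : (k.factorial : ℚ) ≠ 0 := Nat.cast_ne_zero.mpr k.factorial_ne_zero
    have hfk1 : ((k + 1 : ℕ) : ℚ) ≠ 0 := by positivity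
    push_cast
    field_simp
    ring

lemma prod_fact (k : ℕ) : ∀ j : ℕ,
    (∏ i ∈ Finset.range j, (((k : ℚ) + (j : ℚ)) - (i : ℚ))) * (k.factorial : ℚ) =
      ((k + j).factorial : ℚ) := by
  intro j
  induction j with
  | zero => simp
  | succ j ih =>
    rw [Finset.prod_range_succ']
    have h1 : ∀ i ∈ Finset.range j,
        ((k : ℚ) + ((j + 1 : ℕ) : ℚ)) - ((i + 1 : ℕ) : ℚ) = ((k : ℚ) + (j : ℚ)) - (i : ℚ) := by
      intro i _; push_cast; ring
    rw [Finset.prod_congr rfl h1, mul_right_comm, ih]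
    have : k + (j + 1) = (k + j) + 1 := rfl
    rw [this, Nat.factorial_succ]
    push_cast; ring

lemma prod_shift (a : ℚ) (k j : ℕ) :
    ∏ i ∈ Finset.range (k + j), (a - (i : ℚ)) =
      (∏ i ∈ Finset.range k, (a - (i : ℚ))) * ∏ i ∈ Finset.range j, ((a - (k : ℚ)) - (i : ℚ)) := by
  rw [Finset.prod_range_add]
  congr 1
  apply Finset.prod_congr rfl
  intro i _; push_cast; ring

lemma genBinom_subcommittee (a : ℤ) (k j : ℕ) :
    genBinom a ((k : ℤ) + (j : ℤ)) * genBinom ((k : ℤ) + (j : ℤ)) (j : ℤ) =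
      genBinom a (k : ℤ) * genBinom (a - (k : ℤ)) (j : ℤ) := by
  have h1 : ¬ ((k : ℤ) + (j : ℤ) < 0) := by omega
  have h2 : ¬ ((j : ℤ) < 0) := by omega
  have h3 : ¬ ((k : ℤ) < 0) := by omega
  have t1 : ((k : ℤ) + (j : ℤ)).toNat = k + j := by omega
  have t2 : ((j : ℤ)).toNat = j := by omega
  have t3 : ((k : ℤ)).toNat = k := by omega
  simp only [genBinom, if_neg h1, if_neg h2, if_neg h3, t1, t2, t3]
  have e1 : ∏ i ∈ Finset.range (k + j), (((a : ℤ) : ℚ) - ((i : ℤ) : ℚ)) =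
      ∏ i ∈ Finset.range (k + j), (((a : ℚ)) - (i : ℚ)) := by
    apply Finset.prod_congr rfl; intro i _; push_cast; ring
  have e2 : ∏ i ∈ Finset.range j, ((((k : ℤ) + (j : ℤ) : ℤ) : ℚ) - ((i : ℤ) : ℚ)) =
      ∏ i ∈ Finset.range j, (((k : ℚ) + (j : ℚ)) - (i : ℚ)) := by
    apply Finset.prod_congr rfl; intro i _; push_cast; ring
  have e3 : ∏ i ∈ Finset.range k, (((a : ℤ) : ℚ) - ((i : ℤ) : ℚ)) =
      ∏ i ∈ Finset.range k, (((a : ℚ)) - (i : ℚ)) := by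
    apply Finset.prod_congr rfl; intro i _; push_cast; ring
  have e4 : ∏ i ∈ Finset.range j, (((a - (k : ℤ) : ℤ) : ℚ) - ((i : ℤ) : ℚ)) =
      ∏ i ∈ Finset.range j, (((a : ℚ) - (k : ℚ)) - (i : ℚ)) := by
    apply Finset.prod_congr rfl; intro i _; push_cast; ring
  rw [e1, e2, e3, e4, prod_shift (a : ℚ) k j]
  have hf := prod_fact k j
  have hk : (k.factorial : ℚ) ≠ 0 := Nat.cast_ne_zero.mpr k.factorial_ne_zero
  have hj : (j.factorial : ℚ) ≠ 0 := Nat.cast_ne_zero.mpr j.factorial_ne_zero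
  have hkj : ((k + j).factorial : ℚ) ≠ 0 := Nat.cast_ne_zero.mpr (k + j).factorial_ne_zero
  field_simp
  linear_combination ((∏ i ∈ Finset.range k, ((a : ℚ) - (i : ℚ))) *
    (∏ i ∈ Finset.range j, (((a : ℚ) - (k : ℚ)) - (i : ℚ)))) * hf

noncomputable def nterm (m p μ ν : ℤ) (r : ℕ) : ℚ :=
  genBinom (m - μ + ν) (r : ℤ) * genBinom (p + μ - ν) (p - (r : ℤ)) *
    genBinom (μ + (r : ℤ)) (m + p)

lemma R1 (m μ ν : ℤ) (N : ℕ) :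
    ∑ r ∈ Finset.range (N + 1), nterm m (N : ℤ) μ ν r =
      ∑ r ∈ Finset.range (N + 1), nterm m (N : ℤ) μ (ν - 1) r
        + ∑ r ∈ Finset.range N, nterm m ((N : ℤ) - 1) μ (ν - 1) r := by
  set p : ℤ := (N : ℤ) with hp
  set u : ℤ → ℚ := fun r => genBinom (m - μ + (ν - 1)) r with hu
  set v : ℤ → ℚ := fun j => genBinom (p + μ - ν) j with hv
  set w : ℤ → ℚ := fun r => genBinom (μ + r) (m + p) with hw
  set w' : ℤ → ℚ := fun r => genBinom (μ + r) (m + p - 1) with hw'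
  have hterm1 : ∀ r : ℕ, nterm m p μ ν r = (u r + u ((r : ℤ) - 1)) * v (p - r) * w r := by
    intro r
    simp only [nterm, hu, hv, hw]
    rw [show m - μ + ν = (m - μ + (ν - 1)) + 1 by ring, genBinom_succ]
  have hterm2 : ∀ r : ℕ, nterm m p μ (ν - 1) r = u r * (v (p - r) + v (p - r - 1)) * w r := by
    intro r
    simp only [nterm, hu, hv, hw]
    rw [show p + μ - (ν - 1) = (p + μ - ν) + 1 by ring, genBinom_succ]
  have hterm3 : ∀ r : ℕ, nterm m (p - 1) μ (ν - 1) r = u r * v (p - r - 1) * w' r := by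
    intro r
    simp only [nterm, hu, hv, hw']
    rw [show p - 1 + μ - (ν - 1) = p + μ - ν by ring,
      show p - 1 - (r : ℤ) = p - r - 1 by ring,
      show m + (p - 1) = m + p - 1 by ring]
  have key : ∑ r ∈ Finset.range (N + 1), u ((r : ℤ) - 1) * v (p - r) * w r
      = ∑ r ∈ Finset.range (N + 1), u r * v (p - r - 1) * w r
        + ∑ r ∈ Finset.range N, u r * v (p - r - 1) * w' r := by
    rw [Finset.sum_range_succ' (fun r : ℕ => u ((r : ℤ) - 1) * v (p - r) * w r) N]
    rw [Finset.sum_range_succ (fun r : ℕ => u r * v (p - r - 1) * w r) N]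
    have hlast : u (N : ℤ) * v (p - (N : ℤ) - 1) * w (N : ℤ) = 0 := by
      rw [show p - (N : ℤ) - 1 = -1 by omega]
      simp only [hv]
      rw [genBinom_of_neg (show (-1 : ℤ) < 0 by norm_num)]
      ring
    have h0 : u (((0 : ℕ) : ℤ) - 1) * v (p - ((0 : ℕ) : ℤ)) * w ((0 : ℕ) : ℤ) = 0 := by
      rw [show ((0 : ℕ) : ℤ) - 1 = -1 by norm_num]
      simp only [hu]
      rw [genBinom_of_neg (show (-1 : ℤ) < 0 by norm_num)]
      ring
    rw [hlast, h0, add_zero, add_zero]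
    rw [← Finset.sum_add_distrib]
    apply Finset.sum_congr rfl
    intro r _
    have e1 : ((r + 1 : ℕ) : ℤ) - 1 = (r : ℤ) := by push_cast; ring
    have e2 : p - ((r + 1 : ℕ) : ℤ) = p - r - 1 := by push_cast; ring
    have e3 : w ((r + 1 : ℕ) : ℤ) = w (r : ℤ) + w' (r : ℤ) := by
      simp only [hw, hw']
      rw [show μ + ((r + 1 : ℕ) : ℤ) = (μ + r) + 1 by push_cast; ring, genBinom_succ]
    rw [e1, e2, e3]
    ring
  calc ∑ r ∈ Finset.range (N + 1), nterm m p μ ν r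
      = ∑ r ∈ Finset.range (N + 1), (u r * v (p - r) * w r + u ((r : ℤ) - 1) * v (p - r) * w r) := by
        apply Finset.sum_congr rfl; intro r _; rw [hterm1]; ring
    _ = ∑ r ∈ Finset.range (N + 1), u r * v (p - r) * w r
        + ∑ r ∈ Finset.range (N + 1), u ((r : ℤ) - 1) * v (p - r) * w r := Finset.sum_add_distrib
    _ = ∑ r ∈ Finset.range (N + 1), u r * v (p - r) * w r
        + (∑ r ∈ Finset.range (N + 1), u r * v (p - r - 1) * w r
          + ∑ r ∈ Finset.range N, u r * v (p - r - 1) * w' r) := by rw [key]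
    _ = ∑ r ∈ Finset.range (N + 1), (u r * v (p - r) * w r + u r * v (p - r - 1) * w r)
        + ∑ r ∈ Finset.range N, u r * v (p - r - 1) * w' r := by
        rw [Finset.sum_add_distrib]; ring
    _ = ∑ r ∈ Finset.range (N + 1), nterm m p μ (ν - 1) r
        + ∑ r ∈ Finset.range N, nterm m (p - 1) μ (ν - 1) r := by
        congr 1
        · apply Finset.sum_congr rfl; intro r _; rw [hterm2]; ring
        · apply Finset.sum_congr rfl; intro r _; rw [hterm3]

lemma key_pneg (m p μ ν : ℤ) (hp : p < 0) :
    ∑ r ∈ Finset.range (p.toNat + 1), nterm m p μ ν r = genBinom μ m * genBinom ν p := by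
  have h0 : p.toNat = 0 := by omega
  rw [h0, Finset.sum_range_one]
  rw [genBinom_of_neg hp, mul_zero]
  simp only [nterm, Nat.cast_zero, sub_zero]
  rw [genBinom_of_neg hp]
  ring

lemma key_mpneg (m p μ ν : ℤ) (hmp : m + p < 0) :
    ∑ r ∈ Finset.range (p.toNat + 1), nterm m p μ ν r = genBinom μ m * genBinom ν p := by
  have h1 : ∑ r ∈ Finset.range (p.toNat + 1), nterm m p μ ν r = 0 := by
    apply Finset.sum_eq_zero
    intro r _
    simp only [nterm]
    rw [genBinom_of_neg hmp]
    ring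
  rw [h1]
  by_cases hp : p < 0
  · rw [genBinom_of_neg hp]; ring
  · rw [genBinom_of_neg (show m < 0 by omega)]; ring

lemma base_id (m p μ : ℤ) (hp : 0 ≤ p) (hmp : 0 ≤ m + p) :
    genBinom (m + p) p * genBinom μ (m + p) = genBinom μ m * genBinom (μ - m) p := by
  by_cases hm : 0 ≤ m
  · have h := genBinom_subcommittee μ m.toNat p.toNat
    have e1 : ((m.toNat : ℤ)) = m := Int.toNat_of_nonneg hm
    have e2 : ((p.toNat : ℤ)) = p := Int.toNat_of_nonneg hp
    rw [e1, e2] at h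
    rw [← h]
    ring
  · rw [genBinom_eq_zero_of_lt (a := m + p) (l := p) hmp (by omega),
      genBinom_of_neg (show m < 0 by omega)]
    ring

lemma const_of_step (D : ℤ → ℚ) (h : ∀ x : ℤ, D x = D (x - 1)) (a b : ℤ) : D a = D b := by
  suffices H : ∀ (t : ℤ) (c : ℤ), D (c + t) = D c by
    have h1 := H (a - b) b
    rw [show b + (a - b) = a by ring] at h1
    exact h1
  intro t
  induction t using Int.induction_on with
  | zero => intro c; norm_num
  | succ n ih =>
    intro c
    have h1 := h (c + ((n : ℤ) + 1))
    rw [show c + ((n : ℤ) + 1) - 1 = c + n by ring] at h1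
    rw [h1, ih]
  | pred n ih =>
    intro c
    have h1 := h (c + -(n : ℤ))
    rw [show c + -(n : ℤ) - 1 = c + (-(n : ℤ) - 1) by ring] at h1
    rw [← h1, ih]

lemma key (k : ℕ) : ∀ m p μ ν : ℤ, m + p ≤ (k : ℤ) →
    ∑ r ∈ Finset.range (p.toNat + 1), nterm m p μ ν r = genBinom μ m * genBinom ν p := by
  induction k using Nat.strong_induction_on with
  | _ k IH =>
  intro m p μ ν hk
  by_cases hp : p < 0
  · exact key_pneg m p μ ν hp
  by_cases hmp : m + p < 0
  · exact key_mpneg m p μ ν hmp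
  by_cases hp0 : p = 0
  · subst hp0
    have h0 : (0 : ℤ).toNat = 0 := rfl
    rw [h0, Finset.sum_range_one, genBinom_zero, mul_one]
    simp only [nterm, Nat.cast_zero, sub_zero, add_zero, zero_add]
    rw [genBinom_zero, genBinom_zero]; norm_num
  · obtain ⟨N, rfl⟩ : ∃ N : ℕ, p = (N : ℤ) := ⟨p.toNat, by omega⟩
    have hN1 : 1 ≤ N := by omega
    rw [show ((N : ℤ)).toNat = N by omega]
    set D : ℤ → ℚ := fun x =>
      (∑ r ∈ Finset.range (N + 1), nterm m (N : ℤ) μ x r) - genBinom μ m * genBinom x (N : ℤ)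
      with hD
    have hsum : ∀ x : ℤ, ∑ r ∈ Finset.range (N + 1), nterm m (N : ℤ) μ x r =
        ∑ r ∈ Finset.range (N + 1), nterm m (N : ℤ) μ (x - 1) r
          + genBinom μ m * genBinom (x - 1) ((N : ℤ) - 1) := by
      intro x
      rw [R1 m μ x N]
      congr 1
      have hrange : ((N : ℤ) - 1).toNat + 1 = N := by omega
      by_cases hneg : m + ((N : ℤ) - 1) < 0
      · have h := key_mpneg m ((N : ℤ) - 1) μ (x - 1) hneg
        rw [hrange] at h
        exact h
      · have hlt : (m + ((N : ℤ) - 1)).toNat < k := by omega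
        have h := IH _ hlt m ((N : ℤ) - 1) μ (x - 1) (by omega)
        rw [hrange] at h
        exact h
    have hG : ∀ x : ℤ, genBinom x (N : ℤ) =
        genBinom (x - 1) (N : ℤ) + genBinom (x - 1) ((N : ℤ) - 1) := by
      intro x
      have h := genBinom_succ (x - 1) (N : ℤ)
      rw [show x - 1 + 1 = x by ring] at h
      exact h
    have hstep : ∀ x : ℤ, D x = D (x - 1) := by
      intro x
      simp only [hD]
      rw [hsum x, hG x]
      ring
    have hbase : D (μ - m) = 0 := by
      have h1 : ∑ r ∈ Finset.range (N + 1), nterm m (N : ℤ) μ (μ - m) r =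
          nterm m (N : ℤ) μ (μ - m) 0 := by
        apply Finset.sum_eq_single_of_mem 0 (Finset.mem_range.mpr (by omega))
        intro r _ hr
        simp only [nterm]
        rw [show m - μ + (μ - m) = 0 by ring]
        rw [genBinom_eq_zero_of_lt le_rfl (by exact_mod_cast Nat.pos_of_ne_zero hr)]
        ring
      have h2 : nterm m (N : ℤ) μ (μ - m) 0 =
          genBinom (m + (N : ℤ)) (N : ℤ) * genBinom μ (m + (N : ℤ)) := by
        simp only [nterm, Nat.cast_zero, sub_zero, add_zero]
        rw [show m - μ + (μ - m) = 0 by ring, genBinom_zero, one_mul,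
          show (N : ℤ) + μ - (μ - m) = m + (N : ℤ) by ring]
      simp only [hD]
      rw [h1, h2, base_id m (N : ℤ) μ (by omega) (by omega)]
      ring
    have hν : D ν = 0 := by
      rw [const_of_step D hstep ν (μ - m)]
      exact hbase
    have h3 : (∑ r ∈ Finset.range (N + 1), nterm m (N : ℤ) μ ν r)
        - genBinom μ m * genBinom ν (N : ℤ) = 0 := hν
    linarith

theorem nanjundiah (m p μ ν : ℤ) :
    (Function.support fun r : ℤ =>
        genBinom (m - μ + ν) r * genBinom (p + μ - ν) (p - r) *
          genBinom (μ + r) (m + p)).Finite ∧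
      (∑ᶠ r : ℤ, genBinom (m - μ + ν) r * genBinom (p + μ - ν) (p - r) *
          genBinom (μ + r) (m + p)) =
        genBinom μ m * genBinom ν p := by
  set f : ℤ → ℚ := fun r : ℤ =>
    genBinom (m - μ + ν) r * genBinom (p + μ - ν) (p - r) * genBinom (μ + r) (m + p) with hf
  set s : Finset ℤ := (Finset.range (p.toNat + 1)).image (fun r : ℕ => (r : ℤ)) with hs
  have hsupp : Function.support f ⊆ (s : Set ℤ) := by
    intro r hr
    rw [Function.mem_support] at hr
    have h1 : ¬ (r < 0) := by
      intro h
      apply hr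
      simp only [hf]
      rw [genBinom_of_neg h]
      ring
    have h2 : ¬ (p - r < 0) := by
      intro h
      apply hr
      simp only [hf]
      rw [genBinom_of_neg h]
      ring
    simp only [hs, Finset.coe_image, Finset.coe_range, Set.mem_image, Set.mem_Iio]
    exact ⟨r.toNat, by omega, by omega⟩
  constructor
  · exact Set.Finite.subset s.finite_toSet hsupp
  · rw [finsum_eq_sum_of_support_subset f hsupp]
    rw [hs, Finset.sum_image (by intro x _ y _ h; exact Nat.cast_injective h)]
    have he : ∀ r : ℕ, f ((r : ℕ) : ℤ) = nterm m p μ ν r := fun r => rfl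
    rw [Finset.sum_congr rfl fun r _ => he r]
    exact key (m + p).toNat m p μ ν (Int.self_le_toNat _)
end

section
/- Define A^P_n(a,b) for integers n ≥ 0 and a, b ∈ ℤ by: A(a,b) = 0 if a < 0 or b < 0; A(0,0) = 1; otherwise A(a,b) = G^{n+1−a}_{n+1−b}(q) · G^{a−b−1}_{a−1}(q). Then this family satisfies the recursion A^{P_n}(a,b) = Σ_{c∈ℤ} q^{c(b−(a−b)+c)} G^c_{(n+1)−2b}(q) · A^{P_{n−1}}(b, 2b−a+c) for all n ≥ 1 and all a, b ≥ 0 with (a,b) ≠ (0,0). -/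
namespace GProof
variable (q : ℚ)

noncomputable def NN (a : ℤ) (l : ℕ) : ℚ := ∏ i ∈ Finset.range l, (q ^ (a - (i:ℤ)) - 1)
noncomputable def DD (l : ℕ) : ℚ := ∏ i ∈ Finset.range l, (q ^ ((l:ℤ) - (i:ℤ)) - 1)

lemma gaussG_natCast (l : ℕ) (a : ℤ) : gaussG q (l:ℤ) a = NN q a l / DD q l := by
  simp [gaussG, NN, DD]

lemma gaussG_of_nonneg {l : ℤ} (hl : 0 ≤ l) (a : ℤ) :
    gaussG q l a = NN q a l.toNat / DD q l.toNat := by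
  rw [← gaussG_natCast]; rw [Int.toNat_of_nonneg hl]

lemma gaussG_neg {l : ℤ} (hl : l < 0) (a : ℤ) : gaussG q l a = 0 := by
  simp [gaussG, hl]

lemma gaussG_zero (a : ℤ) : gaussG q 0 a = 1 := by simp [gaussG]

lemma NN_succ_left (a : ℤ) (l : ℕ) : NN q a (l+1) = (q ^ a - 1) * NN q (a-1) l := by
  rw [NN, Finset.prod_range_succ', NN]
  simp only [Nat.cast_add, Nat.cast_one, Nat.cast_zero, sub_zero]
  rw [mul_comm]
  congr 1
  apply Finset.prod_congr rfl
  intro i _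
  congr 2
  push_cast
  ring

lemma NN_succ_right (a : ℤ) (l : ℕ) : NN q a (l+1) = NN q a l * (q ^ (a - l) - 1) := by
  rw [NN, Finset.prod_range_succ, NN]

lemma NN_add (a : ℤ) (r s : ℕ) : NN q a (r + s) = NN q a r * NN q (a - r) s := by
  rw [NN, Finset.prod_range_add, NN, NN]
  congr 1
  apply Finset.prod_congr rfl
  intro i _
  congr 2
  push_cast
  ring

lemma DD_succ (l : ℕ) : DD q (l+1) = (q ^ ((l:ℤ)+1) - 1) * DD q l := by
  rw [DD, Finset.prod_range_succ', DD]
  simp only [Nat.cast_add, Nat.cast_one, Nat.cast_zero, sub_zero]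
  rw [mul_comm]
  congr 1
  apply Finset.prod_congr rfl
  intro i _
  congr 2
  push_cast
  ring

lemma DD_eq_NN (l : ℕ) : DD q l = NN q (l:ℤ) l := rfl

lemma NN_mul_DD {r s : ℕ} (hrs : r ≤ s) : NN q (s:ℤ) r * DD q (s - r) = DD q s := by
  have key := NN_add q (s:ℤ) r (s - r)
  have h3 : ((s:ℤ) - (r:ℤ)) = ((s - r : ℕ) : ℤ) := by push_cast; omega
  rw [h3, ← DD_eq_NN] at key
  rw [← key, DD_eq_NN q s]
  congr 1
  omega

variable {q} (hq : 2 ≤ q)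
include hq

lemma q_pos : (0:ℚ) < q := by linarith
lemma q_ne : q ≠ 0 := by linarith

lemma one_lt_zpow' {t : ℤ} (ht : 1 ≤ t) : 1 < q ^ t := by
  obtain ⟨s, rfl⟩ := Int.le.dest ht
  rw [zpow_add₀ (q_ne hq), zpow_one, zpow_natCast]
  have h1 : (1:ℚ) ≤ q ^ s := one_le_pow₀ (by linarith)
  nlinarith

lemma DD_pos (l : ℕ) : 0 < DD q l := by
  apply Finset.prod_pos
  intro i hi
  have : (1:ℚ) < q ^ ((l:ℤ) - (i:ℤ)) := by
    apply one_lt_zpow' hq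
    have := Finset.mem_range.mp hi
    omega
  linarith

lemma DD_ne (l : ℕ) : DD q l ≠ 0 := (DD_pos hq l).ne'

omit hq in
lemma gaussG_eq_zero_of_lt {l a : ℤ} (ha : 0 ≤ a) (hal : a < l) : gaussG q l a = 0 := by
  have hl : 0 ≤ l := le_trans ha hal.le
  rw [gaussG_of_nonneg q hl, NN]
  rw [Finset.prod_eq_zero (i := a.toNat)]
  · exact zero_div _
  · exact Finset.mem_range.mpr (by omega)
  · rw [Int.toNat_of_nonneg ha]
    simp

/-- Pascal: `B(a,l) = B(a-1,l-1) + q^l B(a-1,l)`, all integers. -/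
lemma pascal (l a : ℤ) :
    gaussG q l a = gaussG q (l-1) (a-1) + q ^ l * gaussG q l (a-1) := by
  rcases lt_trichotomy l 0 with hl | hl | hl
  · rw [gaussG_neg q hl, gaussG_neg q (show l - 1 < 0 by omega), gaussG_neg q hl]; ring
  · subst hl
    rw [gaussG_zero, gaussG_zero, gaussG_neg q (show (0:ℤ) - 1 < 0 by norm_num)]
    norm_num
  · obtain ⟨k, hk⟩ : ∃ k : ℕ, l = (k:ℤ) + 1 := ⟨(l-1).toNat, by omega⟩
    subst hk
    have h1 : ((k:ℤ) + 1) - 1 = (k:ℤ) := by ring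
    rw [h1]
    rw [gaussG_of_nonneg q (by positivity), gaussG_natCast, gaussG_of_nonneg q (show (0:ℤ) ≤ (k:ℤ)+1 by omega)]
    have ht : ((k:ℤ)+1).toNat = k + 1 := by omega
    rw [ht]
    rw [NN_succ_left, DD_succ, NN_succ_right q (a-1) k]
    have hd := DD_ne hq k
    have hq1 : q ^ ((k:ℤ)+1) - 1 ≠ 0 := by
      have := one_lt_zpow' hq (t := (k:ℤ)+1) (by omega); linarith
    field_simp
    have hqa : q ^ a = q ^ ((k:ℤ)+1) * q ^ (a - 1 - (k:ℤ)) := by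
      rw [← zpow_add₀ (q_ne hq)]; congr 1; ring
    ring_nf
    rw [hqa]
    ring

/-- `B(l,l) = 1` for `l ≥ 0`. -/
lemma gaussG_self {l : ℤ} (hl : 0 ≤ l) : gaussG q l l = 1 := by
  obtain ⟨ln, rfl⟩ : ∃ ln : ℕ, l = (ln : ℤ) := ⟨l.toNat, by omega⟩
  rw [gaussG_natCast, ← DD_eq_NN]
  exact div_self (DD_ne hq _)

/-- symmetry: for `a ≥ 0`: `B(a, l) = B(a, a - l)`. -/
lemma gaussG_symm {a : ℤ} (ha : 0 ≤ a) (l : ℤ) : gaussG q l a = gaussG q (a - l) a := by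
  rcases lt_trichotomy l 0 with hl | hl | hl
  · rw [gaussG_neg q hl, gaussG_eq_zero_of_lt (q := q) ha (show a < a - l by omega)]
  · subst hl; rw [sub_zero, gaussG_zero, gaussG_self hq ha]
  rcases le_or_gt l a with hla | hla
  · obtain ⟨an, rfl⟩ : ∃ an : ℕ, a = (an : ℤ) := ⟨a.toNat, by omega⟩
    obtain ⟨ln, rfl⟩ : ∃ ln : ℕ, l = (ln : ℤ) := ⟨l.toNat, by omega⟩
    have h1 : (an:ℤ) - ln = ((an - ln : ℕ) : ℤ) := by push_cast; omega
    rw [gaussG_natCast, h1, gaussG_natCast]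
    have hle : ln ≤ an := by omega
    have e1 := NN_mul_DD q (r := ln) (s := an) hle
    have e2 := NN_mul_DD q (r := an - ln) (s := an) (by omega)
    have h2 : an - (an - ln) = ln := by omega
    rw [h2] at e2
    rw [div_eq_div_iff (DD_ne hq ln) (DD_ne hq (an - ln))]
    calc NN q (an:ℤ) ln * DD q (an - ln) = DD q an := e1
    _ = NN q (an:ℤ) (an - ln) * DD q ln := e2.symm
  · rw [gaussG_eq_zero_of_lt (q := q) ha hla, gaussG_neg q (show a - l < 0 by omega)]

/-- trinomial: for `0 ≤ s`, any `t r`: `B(t,s)·B(s,r) = B(t,r)·B(t-r, s-r)`. -/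
lemma gaussG_trinomial {s : ℤ} (hs : 0 ≤ s) (t r : ℤ) :
    gaussG q s t * gaussG q r s = gaussG q r t * gaussG q (s - r) (t - r) := by
  rcases lt_trichotomy r 0 with hr | hr | hr
  · rw [gaussG_neg q hr, gaussG_neg q hr]; ring
  · subst hr; rw [gaussG_zero, gaussG_zero, sub_zero, sub_zero]; ring
  rcases le_or_gt r s with hrs | hrs
  · obtain ⟨sn, rfl⟩ : ∃ sn : ℕ, s = (sn : ℤ) := ⟨s.toNat, by omega⟩
    obtain ⟨rn, rfl⟩ : ∃ rn : ℕ, r = (rn : ℤ) := ⟨r.toNat, by omega⟩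
    have hle : rn ≤ sn := by omega
    have h1 : (sn:ℤ) - rn = ((sn - rn : ℕ) : ℤ) := by push_cast; omega
    rw [gaussG_natCast, gaussG_natCast, gaussG_natCast, h1, gaussG_natCast]
    have e1 : NN q t sn = NN q t rn * NN q (t - rn) (sn - rn) := by
      rw [show sn = rn + (sn - rn) by omega, NN_add]
      congr 3
      omega
    have e2 := NN_mul_DD q hle
    have d1 := DD_ne hq sn
    have d2 := DD_ne hq rn
    have d3 := DD_ne hq (sn - rn)
    field_simp
    have hc : NN q t sn * NN q (sn:ℤ) rn * (DD q rn * DD q (sn - rn))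
        = NN q t rn * NN q (t - rn) (sn - rn) * (DD q sn * DD q rn) := by
      calc NN q t sn * NN q (sn:ℤ) rn * (DD q rn * DD q (sn - rn))
          = NN q t rn * NN q (t - rn) (sn - rn) * DD q rn * (NN q (sn:ℤ) rn * DD q (sn - rn)) := by
            rw [e1]; ring
        _ = NN q t rn * NN q (t - rn) (sn - rn) * (DD q sn * DD q rn) := by rw [e2]; ring
    apply mul_right_cancel₀ d2
    linear_combination hc
  · rw [gaussG_eq_zero_of_lt (q := q) hs hrs, gaussG_neg q (show s - r < 0 by omega)]
    ring


/-- Generalized q-Vandermonde (form V2), valid for arbitrary integer `x` and natural `y`. -/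
lemma vdm2 (y : ℕ) : ∀ (x k : ℤ),
    gaussG q k (x + (y:ℤ)) =
      ∑ j ∈ Finset.Icc (0:ℤ) k,
        q ^ (j * ((y:ℤ) - k + j)) * gaussG q j x * gaussG q (k - j) (y:ℤ) := by
  induction y with
  | zero =>
    intro x k
    rcases lt_or_ge k 0 with hk | hk
    · rw [Finset.Icc_eq_empty (by omega), Finset.sum_empty, gaussG_neg q hk]
    · push_cast
      rw [add_zero]
      rw [Finset.sum_eq_single_of_mem k (Finset.mem_Icc.mpr ⟨hk, le_refl k⟩)]
      · rw [sub_self, gaussG_zero, show k * (0 - k + k) = 0 by ring, zpow_zero]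
        ring
      · intro j hj hjk
        have hjm := Finset.mem_Icc.mp hj
        rw [gaussG_eq_zero_of_lt (le_refl (0:ℤ)) (show (0:ℤ) < k - j by omega)]
        ring
  | succ y ih =>
    intro x k
    rcases lt_or_ge k 0 with hk | hk
    · rw [Finset.Icc_eq_empty (by omega), Finset.sum_empty, gaussG_neg q hk]
    · have key : (∑ j ∈ Finset.Icc (0:ℤ) k,
          q ^ (j * (((y+1:ℕ):ℤ) - k + j)) * gaussG q j x * gaussG q (k - j) ((y+1:ℕ):ℤ))
        = (∑ j ∈ Finset.Icc (0:ℤ) (k-1),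
            q ^ (j * ((y:ℤ) - (k-1) + j)) * gaussG q j x * gaussG q ((k-1) - j) (y:ℤ))
          + q ^ k * ∑ j ∈ Finset.Icc (0:ℤ) k,
            q ^ (j * ((y:ℤ) - k + j)) * gaussG q j x * gaussG q (k - j) (y:ℤ) := by
        have step1 : ∀ j ∈ Finset.Icc (0:ℤ) k,
            q ^ (j * (((y+1:ℕ):ℤ) - k + j)) * gaussG q j x * gaussG q (k - j) ((y+1:ℕ):ℤ)
            = q ^ (j * ((y:ℤ) - (k-1) + j)) * gaussG q j x * gaussG q ((k-1) - j) (y:ℤ)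
              + q ^ k * (q ^ (j * ((y:ℤ) - k + j)) * gaussG q j x * gaussG q (k - j) (y:ℤ)) := by
          intro j _
          have hcast : ((y+1:ℕ):ℤ) = (y:ℤ) + 1 := by push_cast; ring
          rw [hcast, pascal hq (k - j) ((y:ℤ)+1)]
          rw [show (y:ℤ) + 1 - 1 = (y:ℤ) by ring]
          rw [show k - j - 1 = (k-1) - j by ring]
          have e1 : j * ((y:ℤ) + 1 - k + j) = j * ((y:ℤ) - (k-1) + j) := by ring
          rw [e1]
          have e2 : q ^ (j * ((y:ℤ) - (k-1) + j)) * q ^ (k - j)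
              = q ^ k * q ^ (j * ((y:ℤ) - k + j)) := by
            rw [← zpow_add₀ (q_ne hq), ← zpow_add₀ (q_ne hq)]
            congr 1
            ring
          calc q ^ (j * ((y:ℤ) - (k-1) + j)) * gaussG q j x *
                (gaussG q ((k-1) - j) (y:ℤ) + q ^ (k - j) * gaussG q (k - j) (y:ℤ))
              = q ^ (j * ((y:ℤ) - (k-1) + j)) * gaussG q j x * gaussG q ((k-1) - j) (y:ℤ)
                + (q ^ (j * ((y:ℤ) - (k-1) + j)) * q ^ (k - j)) *
                  (gaussG q j x * gaussG q (k - j) (y:ℤ)) := by ring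
            _ = _ := by rw [e2]; ring
        rw [Finset.sum_congr rfl step1, Finset.sum_add_distrib, ← Finset.mul_sum]
        congr 1
        -- drop the j = k term (it vanishes)
        have hins : Finset.Icc (0:ℤ) k = insert k (Finset.Icc (0:ℤ) (k-1)) := by
          ext z
          simp only [Finset.mem_Icc, Finset.mem_insert]
          omega
        rw [hins, Finset.sum_insert (by simp only [Finset.mem_Icc]; omega)]
        rw [show (k-1) - k = (-1 : ℤ) by ring, gaussG_neg q (show (-1:ℤ) < 0 by norm_num)]
        ring
      rw [key, ← ih x k, ← ih x (k-1)]
      have hcast2 : x + ((y+1:ℕ):ℤ) = (x + (y:ℤ)) + 1 := by push_cast; ring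
      rw [hcast2, pascal hq k (x + (y:ℤ) + 1)]
      rw [show x + (y:ℤ) + 1 - 1 = x + (y:ℤ) by ring]


end GProof

open GProof

/-- Closed-form family `A^{P_n}(a,b)`, the cardinality of the Grassmannian of submodules
of dimension vector `(a,b)` of the preprojective Kronecker module `P_n`. -/
noncomputable def AP (q : ℚ) (n : ℕ) (a b : ℤ) : ℚ :=
  if a < 0 ∨ b < 0 then 0
  else if a = 0 ∧ b = 0 then 1
  else gaussG q ((n : ℤ) + 1 - a) ((n : ℤ) + 1 - b) * gaussG q (a - b - 1) (a - 1)

theorem AP_recursion (q : ℚ) (hq : 2 ≤ q) (n : ℕ) (hn : 1 ≤ n) (a b : ℤ)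
    (ha : 0 ≤ a) (hb : 0 ≤ b) (hab : ¬(a = 0 ∧ b = 0)) :
    (Function.support fun c : ℤ =>
        q ^ (c * (b - (a - b) + c)) * gaussG q c ((n : ℤ) + 1 - 2 * b) *
          AP q (n - 1) b (2 * b - a + c)).Finite ∧
      AP q n a b =
        ∑ᶠ c : ℤ, q ^ (c * (b - (a - b) + c)) * gaussG q c ((n : ℤ) + 1 - 2 * b) *
          AP q (n - 1) b (2 * b - a + c) := by
  have hcn : ((n - 1 : ℕ) : ℤ) = (n : ℤ) - 1 := by omega
  set f : ℤ → ℚ := fun c =>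
    q ^ (c * (b - (a - b) + c)) * gaussG q c ((n : ℤ) + 1 - 2 * b) *
      AP q (n - 1) b (2 * b - a + c) with hf
  -- basic vanishing facts for AP (n-1) b ·
  have hAP0 : ∀ e : ℤ, e < 0 → AP q (n - 1) b e = 0 := by
    intro e he
    rw [AP, if_pos (by omega)]
  have hAPgt : ∀ e : ℤ, 1 ≤ b → b - 1 < e → AP q (n - 1) b e = 0 := by
    intro e hb1 hbe
    rcases lt_or_ge e 0 with he | he
    · exact hAP0 e he
    · rw [AP, if_neg (by omega), if_neg (by omega),
        gaussG_neg q (show b - e - 1 < 0 by omega), mul_zero]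
  have hAPz : ∀ e : ℤ, AP q (n - 1) b e ≠ 0 →
      0 ≤ e ∧ (e ≤ b - 1 ∨ (b = 0 ∧ e = 0)) := by
    intro e hne
    have he : 0 ≤ e := by
      by_contra h
      exact hne (hAP0 e (by omega))
    refine ⟨he, ?_⟩
    rcases le_or_gt e (b-1) with h1 | h1
    · exact Or.inl h1
    · rcases eq_or_lt_of_le hb with hb0 | hb1
      · rcases eq_or_lt_of_le he with he0 | he1
        · exact Or.inr ⟨hb0.symm, he0.symm⟩
        · refine absurd ?_ hne
          rw [AP, if_neg (by omega), if_neg (by omega),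
            gaussG_neg q (show b - e - 1 < 0 by omega), mul_zero]
      · exact absurd (hAPgt e (by omega) h1) hne
  -- support bound
  have hsupp : Function.support f ⊆ ↑(Finset.Icc (0:ℤ) a) := by
    intro c hc
    simp only [Function.mem_support, hf] at hc
    have h1 : gaussG q c ((n : ℤ) + 1 - 2 * b) ≠ 0 := fun h => hc (by rw [h]; ring)
    have h2 : AP q (n - 1) b (2 * b - a + c) ≠ 0 := fun h => hc (by rw [h]; ring)
    have hc0 : 0 ≤ c := by
      by_contra hneg
      exact h1 (gaussG_neg q (by omega) _)
    obtain ⟨he0, hed⟩ := hAPz _ h2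
    simp only [Finset.coe_Icc, Set.mem_Icc]
    omega
  have hfin : (Function.support f).Finite :=
    Set.Finite.subset (Finset.Icc (0:ℤ) a).finite_toSet hsupp
  refine ⟨hfin, ?_⟩
  rw [finsum_eq_sum_of_support_subset f hsupp]
  -- case analysis
  rcases eq_or_lt_of_le hb with hb0 | hb1
  · -- Case I : b = 0
    have hb0' : b = 0 := hb0.symm
    subst hb0'
    have ha1 : 1 ≤ a := by omega
    rw [Finset.sum_eq_single_of_mem a (Finset.mem_Icc.mpr ⟨ha, le_refl a⟩)]
    · simp only [hf]
      rw [show 2 * (0:ℤ) - a + a = 0 by ring]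
      rw [show a * ((0:ℤ) - (a - 0) + a) = 0 by ring, zpow_zero]
      rw [show (n:ℤ) + 1 - 2 * 0 = (n:ℤ) + 1 by ring]
      rw [show AP q (n-1) 0 0 = 1 by rw [AP, if_neg (by omega), if_pos ⟨rfl, rfl⟩]]
      rw [AP, if_neg (by omega), if_neg (by omega)]
      rw [show a - (0:ℤ) - 1 = a - 1 by ring, gaussG_self hq (show (0:ℤ) ≤ a - 1 by omega)]
      rw [show (n:ℤ) + 1 - (0:ℤ) = (n:ℤ) + 1 by ring]
      rw [gaussG_symm hq (show (0:ℤ) ≤ (n:ℤ) + 1 by omega) ((n:ℤ) + 1 - a)]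
      rw [show (n:ℤ) + 1 - ((n:ℤ) + 1 - a) = a by ring]
      ring
    · intro c hcm hca
      have hcc := Finset.mem_Icc.mp hcm
      simp only [hf]
      rw [hAP0 (2 * 0 - a + c) (by omega), mul_zero]
  rcases le_or_gt a b with hab2 | hab2
  · -- Case II : 1 ≤ b, a ≤ b
    rw [Finset.sum_eq_zero, AP, if_neg (by omega), if_neg (by omega),
      gaussG_neg q (show a - b - 1 < 0 by omega), mul_zero]
    intro c hc
    have hcc := Finset.mem_Icc.mp hc
    have hz : AP q (n-1) b (2 * b - a + c) = 0 := by
      by_contra hne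
      obtain ⟨h1, h2⟩ := hAPz _ hne
      omega
    simp only [hf]
    rw [hz, mul_zero]
  rcases lt_or_ge (n:ℤ) b with hnb | hnb
  · -- Case III : 1 ≤ b, a ≥ b+1, n < b
    rw [Finset.sum_eq_zero, AP, if_neg (by omega), if_neg (by omega),
      gaussG_neg q (show (n:ℤ) + 1 - a < 0 by omega), zero_mul]
    intro c hc
    have hz : AP q (n-1) b (2 * b - a + c) = 0 := by
      rcases lt_or_ge (2 * b - a + c) 0 with he | he
      · exact hAP0 _ he
      · rw [AP, if_neg (by omega), if_neg (by omega),
          gaussG_neg q (show ((n-1:ℕ):ℤ) + 1 - b < 0 by omega), zero_mul]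
    simp only [hf]
    rw [hz, mul_zero]
  · -- Case IV : 1 ≤ b ≤ n, a ≥ b+1
    rw [AP, if_neg (by omega), if_neg (by omega)]
    rw [gaussG_symm hq (show (0:ℤ) ≤ (n:ℤ) + 1 - b by omega) ((n:ℤ) + 1 - a),
      show (n:ℤ) + 1 - b - ((n:ℤ) + 1 - a) = a - b by ring,
      gaussG_symm hq (show (0:ℤ) ≤ a - 1 by omega) (a - b - 1),
      show a - 1 - (a - b - 1) = b by ring]
    have hv1 := vdm2 hq (b-1).toNat (a - b) b
    rw [show (((b-1).toNat : ℕ) : ℤ) = b - 1 by omega,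
      show a - b + (b - 1) = a - 1 by ring] at hv1
    rw [hv1, Finset.mul_sum]
    trans (∑ j ∈ Finset.Icc (0:ℤ) b, ∑ c ∈ Finset.Icc (0:ℤ) a,
      (q ^ (j * (b - 1 - b + j)) * gaussG q j ((n:ℤ) + 1 - b) * gaussG q (b - j) (b - 1)) *
        (q ^ (c * (b - (a - b) + c)) * gaussG q c ((n:ℤ) + 1 - 2 * b) *
          gaussG q (a - b - j - c) (b - j)))
    · refine Finset.sum_congr rfl fun j hj => ?_
      obtain ⟨hj0, hjb⟩ := Finset.mem_Icc.mp hj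
      have htri := gaussG_trinomial hq (show (0:ℤ) ≤ a - b by omega) ((n:ℤ) + 1 - b) j
      have hv2 := vdm2 hq (b - j).toNat ((n:ℤ) + 1 - 2 * b) (a - b - j)
      rw [show (((b - j).toNat : ℕ) : ℤ) = b - j by omega,
        show (n:ℤ) + 1 - 2 * b + (b - j) = (n:ℤ) + 1 - b - j by ring] at hv2
      have hv2' : gaussG q (a - b - j) ((n:ℤ) + 1 - b - j) =
          ∑ c ∈ Finset.Icc (0:ℤ) a,
            (q ^ (c * (b - (a - b) + c)) * gaussG q c ((n:ℤ) + 1 - 2 * b) *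
              gaussG q (a - b - j - c) (b - j)) := by
        rw [hv2]
        refine Eq.trans (Finset.sum_congr rfl fun c hc => ?_)
          (Finset.sum_subset (Finset.Icc_subset_Icc le_rfl (by omega)) fun c hcm hcn => ?_)
        · rw [show c * (b - j - (a - b - j) + c) = c * (b - (a - b) + c) by ring]
        · have h1 := Finset.mem_Icc.mp hcm
          have h2 : ¬(0 ≤ c ∧ c ≤ a - b - j) := fun hh => hcn (Finset.mem_Icc.mpr hh)
          rw [gaussG_neg q (show a - b - j - c < 0 by omega), mul_zero]
      rw [← Finset.mul_sum, ← hv2']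
      linear_combination (q ^ (j * (b - 1 - b + j)) * gaussG q (b - j) (b - 1)) * htri
    rw [Finset.sum_comm]
    refine Finset.sum_congr rfl fun c hc => ?_
    obtain ⟨hc0, hca⟩ := Finset.mem_Icc.mp hc
    trans ((q ^ (c * (b - (a - b) + c)) * gaussG q c ((n:ℤ) + 1 - 2 * b) *
          gaussG q (2*b - a + c) (b - 1)) *
        ∑ j ∈ Finset.Icc (0:ℤ) b,
          (q ^ (j * (b - 1 - b + j)) * gaussG q j ((n:ℤ) + 1 - b) *
            gaussG q (b - (2*b - a + c) - j) (b - 1 - (2*b - a + c))))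
    · rw [Finset.mul_sum]
      refine Finset.sum_congr rfl fun j hj => ?_
      obtain ⟨hj0, hjb⟩ := Finset.mem_Icc.mp hj
      have hsym := gaussG_symm hq (show (0:ℤ) ≤ b - j by omega) (a - b - j - c)
      rw [show b - j - (a - b - j - c) = 2*b - a + c by ring] at hsym
      have htri2 := gaussG_trinomial hq (show (0:ℤ) ≤ b - j by omega) (b - 1) (2*b - a + c)
      rw [show b - j - (2*b - a + c) = b - (2*b - a + c) - j by ring] at htri2
      rw [hsym]
      linear_combination (q ^ (j * (b - 1 - b + j)) * gaussG q j ((n:ℤ) + 1 - b) *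
        (q ^ (c * (b - (a - b) + c)) * gaussG q c ((n:ℤ) + 1 - 2 * b))) * htri2
    by_cases hd : 0 ≤ 2*b - a + c ∧ 2*b - a + c ≤ b - 1
    · obtain ⟨hd0, hd1⟩ := hd
      have hv3 := vdm2 hq (b - 1 - (2*b - a + c)).toNat ((n:ℤ) + 1 - b) (b - (2*b - a + c))
      rw [show (((b - 1 - (2*b - a + c)).toNat : ℕ) : ℤ) = b - 1 - (2*b - a + c) by omega,
        show (n:ℤ) + 1 - b + (b - 1 - (2*b - a + c)) = (n:ℤ) - (2*b - a + c) by ring] at hv3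
      have hv3' : gaussG q (b - (2*b - a + c)) ((n:ℤ) - (2*b - a + c)) =
          ∑ j ∈ Finset.Icc (0:ℤ) b,
            (q ^ (j * (b - 1 - b + j)) * gaussG q j ((n:ℤ) + 1 - b) *
              gaussG q (b - (2*b - a + c) - j) (b - 1 - (2*b - a + c))) := by
        rw [hv3]
        refine Eq.trans (Finset.sum_congr rfl fun j hj => ?_)
          (Finset.sum_subset (Finset.Icc_subset_Icc le_rfl (by omega)) fun j hjm hjn => ?_)
        · rw [show j * (b - 1 - (2*b - a + c) - (b - (2*b - a + c)) + j) = j * (b - 1 - b + j) by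
            ring]
        · have h1 := Finset.mem_Icc.mp hjm
          have h2 : ¬(0 ≤ j ∧ j ≤ b - (2*b - a + c)) := fun hh => hjn (Finset.mem_Icc.mpr hh)
          rw [gaussG_neg q (show b - (2*b - a + c) - j < 0 by omega), mul_zero]
      rw [← hv3']
      rw [gaussG_symm hq (show (0:ℤ) ≤ (n:ℤ) - (2*b - a + c) by omega) (b - (2*b - a + c)),
        show (n:ℤ) - (2*b - a + c) - (b - (2*b - a + c)) = (n:ℤ) - b by ring]
      simp only [hf]
      rw [AP, if_neg (by omega), if_neg (by omega), hcn,
        show (n:ℤ) - 1 + 1 - b = (n:ℤ) - b by ring,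
        show (n:ℤ) - 1 + 1 - (2 * b - a + c) = (n:ℤ) - (2*b - a + c) by ring,
        gaussG_symm hq (show (0:ℤ) ≤ b - 1 by omega) (2*b - a + c),
        show b - 1 - (2*b - a + c) = b - (2*b - a + c) - 1 by ring]
      ring
    · have hK : gaussG q (2*b - a + c) (b - 1) = 0 := by
        rcases lt_or_ge (2*b - a + c) 0 with h | h
        · exact gaussG_neg q h _
        · exact gaussG_eq_zero_of_lt (show (0:ℤ) ≤ b - 1 by omega) (by omega)
      have hAPc : AP q (n - 1) b (2 * b - a + c) = 0 := by
        rcases lt_or_ge (2*b - a + c) 0 with h | h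
        · exact hAP0 _ h
        · exact hAPgt _ (by omega) (by omega)
      simp only [hf]
      rw [hK, hAPc, mul_zero, zero_mul]
end

section
/- Define A^{R_t}(a,b) for integers t ≥ 1 and a, b ∈ ℤ by A(a,b) = 0 if a < 0 or b < 0, and A(a,b) = G^{t−a}_{t−b}(q) · G^{a−b}_a(q) otherwise. Then for all integers t ≥ 1 and 0 < b < a ≤ t, one has A^{R_t}(a,b) = Σ_{c∈ℤ} q^{c(2b−a+c)} G^c_{t−2b}(q) · A^{R_t}(b, 2b−a+c). -/
/-- Closed-form family `A^{R_t}(a,b)`, the cardinality of the Grassmannian of submodules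
of dimension vector `(a,b)` of the regular Kronecker module `R_p(t)` at a degree-one point. -/
noncomputable def AR (q : ℚ) (t a b : ℤ) : ℚ :=
  if a < 0 ∨ b < 0 then 0
  else gaussG q (t - a) (t - b) * gaussG q (a - b) a

namespace ARaux


noncomputable def Np (q : ℚ) (l : ℕ) (a : ℤ) : ℚ :=
  ∏ i ∈ Finset.range l, (q ^ (a - (i : ℤ)) - 1)

variable {q : ℚ}

lemma qpos (hq : 2 ≤ q) : (0:ℚ) < q := lt_of_lt_of_le two_pos hq
lemma qne (hq : 2 ≤ q) : q ≠ 0 := ne_of_gt (qpos hq)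
lemma q1 (hq : 2 ≤ q) : 1 < q := lt_of_lt_of_le one_lt_two hq

lemma zpow_sub_one_ne (hq : 2 ≤ q) {n : ℤ} (hn : 1 ≤ n) : q ^ n - 1 ≠ 0 := by
  have : 1 < q ^ n := one_lt_zpow₀ (q1 hq) hn
  linarith

lemma Np_ne_zero (hq : 2 ≤ q) {l : ℕ} {a : ℤ} (h : (l:ℤ) ≤ a) : Np q l a ≠ 0 := by
  refine Finset.prod_ne_zero_iff.2 fun i hi => ?_
  have hi' : (i:ℤ) < l := by exact_mod_cast Finset.mem_range.1 hi
  exact zpow_sub_one_ne hq (by omega)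

lemma Np_add (l m : ℕ) (a : ℤ) : Np q (l + m) a = Np q l a * Np q m (a - l) := by
  rw [Np, Finset.prod_range_add]
  congr 1
  refine Finset.prod_congr rfl fun i _ => ?_
  congr 1
  push_cast
  ring

lemma gaussG_eq (l : ℕ) (a : ℤ) : gaussG q l a = Np q l a / Np q l l := by
  simp [gaussG, Np]

lemma gaussG_neg {l : ℤ} (h : l < 0) (a : ℤ) : gaussG q l a = 0 := by
  simp [gaussG, h]

@[simp] lemma gaussG_zero (a : ℤ) : gaussG q 0 a = 1 := by
  simp [gaussG]

@[simp] lemma gaussG_neg_one (a : ℤ) : gaussG q (-1) a = 0 := gaussG_neg (by norm_num) a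

lemma gaussG_vanish (hq : 2 ≤ q) {l : ℕ} {a : ℤ} (h0 : 0 ≤ a) (h : a < (l:ℤ)) :
    gaussG q l a = 0 := by
  rw [gaussG_eq]
  have : Np q l a = 0 := by
    refine Finset.prod_eq_zero (i := a.toNat) (Finset.mem_range.2 (by omega)) ?_
    have : a - (a.toNat : ℤ) = 0 := by omega
    rw [this]
    norm_num
  rw [this, zero_div]

@[simp] lemma Np_one (a : ℤ) : Np q 1 a = q ^ a - 1 := by
  simp [Np]

lemma Np_succ_first (l : ℕ) (a : ℤ) : Np q (l+1) a = (q ^ a - 1) * Np q l (a - 1) := by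
  have h := Np_add (q := q) 1 l a
  rw [add_comm 1 l] at h
  simpa using h

lemma Np_succ_last (l : ℕ) (a : ℤ) : Np q (l+1) a = Np q l a * (q ^ (a - l) - 1) := by
  have h := Np_add (q := q) l 1 a
  simpa using h

lemma gaussG_eq' (l : ℕ) (a : ℤ) : gaussG q ((l:ℤ)+1) a = Np q (l+1) a / Np q (l+1) ((l:ℤ)+1) := by
  have h := gaussG_eq (q := q) (l+1) a
  push_cast at h
  rw [h]

lemma abs1 (hq : 2 ≤ q) (l : ℕ) (a : ℤ) :
    gaussG q ((l:ℤ)+1) a = gaussG q l (a-1) * ((q ^ a - 1) / (q ^ ((l:ℤ)+1) - 1)) := by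
  rw [gaussG_eq', gaussG_eq]
  rw [Np_succ_first l a, Np_succ_first l ((l:ℤ)+1)]
  have h1 : Np q l ((l:ℤ)+1-1) = Np q l l := by norm_num
  rw [h1]
  have h2 : Np q l (l:ℤ) ≠ 0 := Np_ne_zero hq le_rfl
  have h3 : q ^ ((l:ℤ)+1) - 1 ≠ 0 := zpow_sub_one_ne hq (by omega)
  field_simp
  try ring
  try exact Or.inl trivial

lemma abs2 (hq : 2 ≤ q) (l : ℕ) (a : ℤ) :
    gaussG q ((l:ℤ)+1) a = gaussG q l a * ((q ^ (a - l) - 1) / (q ^ ((l:ℤ)+1) - 1)) := by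
  rw [gaussG_eq', gaussG_eq]
  rw [Np_succ_last l a, Np_succ_first l ((l:ℤ)+1)]
  have h1 : Np q l ((l:ℤ)+1-1) = Np q l l := by norm_num
  rw [h1]
  have h2 : Np q l (l:ℤ) ≠ 0 := Np_ne_zero hq le_rfl
  have h3 : q ^ ((l:ℤ)+1) - 1 ≠ 0 := zpow_sub_one_ne hq (by omega)
  field_simp
  try ring
  try exact Or.inl trivial

lemma pascalA (hq : 2 ≤ q) (j : ℕ) (a : ℤ) :
    gaussG q j a = gaussG q j (a-1) + q ^ (a - j) * gaussG q ((j:ℤ)-1) (a-1) := by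
  cases j with
  | zero => simp
  | succ l =>
    push_cast
    rw [show (l:ℤ) + 1 - 1 = (l:ℤ) by ring]
    rw [abs1 hq l a, abs2 hq l (a-1)]
    have h3 : q ^ ((l:ℤ)+1) - 1 ≠ 0 := zpow_sub_one_ne hq (by omega)
    have hq0 : q ≠ 0 := qne hq
    have key : q ^ (a - 1 - l) - 1 + q ^ (a - ((l:ℤ)+1)) * (q ^ ((l:ℤ)+1) - 1) = q ^ a - 1 := by
      have e1 : q ^ (a - ((l:ℤ)+1)) * q ^ ((l:ℤ)+1) = q ^ a := by
        rw [← zpow_add₀ hq0]; ring_nf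
      have e2 : a - 1 - l = a - ((l:ℤ)+1) := by ring
      rw [e2]
      linear_combination e1
    suffices h : (q ^ a - 1) / (q ^ ((l:ℤ)+1) - 1)
        = (q ^ (a - 1 - (l:ℤ)) - 1) / (q ^ ((l:ℤ)+1) - 1) + q ^ (a - ((l:ℤ)+1)) by
      rw [h]; ring
    field_simp
    linear_combination -key

lemma pascalB (hq : 2 ≤ q) (j : ℕ) (a : ℤ) :
    gaussG q j a = q ^ (j:ℤ) * gaussG q j (a-1) + gaussG q ((j:ℤ)-1) (a-1) := by
  cases j with
  | zero => simp
  | succ l =>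
    push_cast
    rw [show (l:ℤ) + 1 - 1 = (l:ℤ) by ring]
    rw [abs1 hq l a, abs2 hq l (a-1)]
    have h3 : q ^ ((l:ℤ)+1) - 1 ≠ 0 := zpow_sub_one_ne hq (by omega)
    have hq0 : q ≠ 0 := qne hq
    have key : q ^ ((l:ℤ)+1) * (q ^ (a - 1 - l) - 1) + (q ^ ((l:ℤ)+1) - 1) = q ^ a - 1 := by
      have e1 : q ^ ((l:ℤ)+1) * q ^ (a - 1 - l) = q ^ a := by
        rw [← zpow_add₀ hq0]; ring_nf
      linear_combination e1
    suffices h : (q ^ a - 1) / (q ^ ((l:ℤ)+1) - 1)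
        = q ^ ((l:ℤ)+1) * ((q ^ (a - 1 - (l:ℤ)) - 1) / (q ^ ((l:ℤ)+1) - 1)) + 1 by
      rw [h]; ring
    field_simp
    linear_combination -key

lemma vandermonde (hq : 2 ≤ q) (k : ℕ) : ∀ (x : ℕ) (y : ℤ),
    gaussG q k ((x:ℤ) + y) =
      ∑ j ∈ Finset.range (k+1),
        q ^ (((x:ℤ) - j) * ((k:ℤ) - j)) * gaussG q j x * gaussG q ((k:ℤ) - j) y := by
  intro x
  induction x with
  | zero =>
    intro y
    rw [Finset.sum_eq_single_of_mem 0 (Finset.mem_range.2 (by omega))]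
    · simp
    · intro j hj hj0
      have : gaussG q j (0:ℕ) = 0 :=
        gaussG_vanish hq le_rfl (by exact_mod_cast Nat.pos_of_ne_zero hj0)
      rw [this]; ring
  | succ x ih =>
    intro y
    have hq0 : q ≠ 0 := qne hq
    have lhs0 : ((x+1:ℕ):ℤ) + y = (x:ℤ) + (y+1) := by push_cast; ring
    rw [lhs0, ih (y+1)]
    -- expand left side via pascalB on gaussG (k-j) (y+1)
    have L : ∑ j ∈ Finset.range (k+1),
        q ^ (((x:ℤ) - j) * ((k:ℤ) - j)) * gaussG q j x * gaussG q ((k:ℤ) - j) (y+1)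
      = (∑ j ∈ Finset.range (k+1),
          q ^ (((x:ℤ)+1 - j) * ((k:ℤ) - j)) * gaussG q j x * gaussG q ((k:ℤ) - j) y)
        + ∑ j ∈ Finset.range (k+1),
          q ^ (((x:ℤ) - j) * ((k:ℤ) - j)) * gaussG q j x * gaussG q ((k:ℤ) - j - 1) y := by
      rw [← Finset.sum_add_distrib]
      refine Finset.sum_congr rfl fun j hj => ?_
      have hjk : j ≤ k := by have := Finset.mem_range.1 hj; omega
      have hcast : ((k - j : ℕ) : ℤ) = (k:ℤ) - j := by omega
      have hp := pascalB hq (k - j) (y+1)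
      rw [hcast] at hp
      simp only [add_sub_cancel_right] at hp
      rw [hp]
      have he : q ^ (((x:ℤ)+1 - j) * ((k:ℤ) - j))
          = q ^ (((x:ℤ) - j) * ((k:ℤ) - j)) * q ^ ((k:ℤ) - j) := by
        rw [← zpow_add₀ hq0]; ring
      rw [he]; ring
    rw [L]
    -- expand right side via pascalA on gaussG j (x+1)
    have R : ∑ j ∈ Finset.range (k+1),
        q ^ ((((x:ℕ)+1:ℤ) - j) * ((k:ℤ) - j)) * gaussG q j ((x:ℕ)+1:ℤ) * gaussG q ((k:ℤ) - j) y
      = (∑ j ∈ Finset.range (k+1),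
          q ^ (((x:ℤ)+1 - j) * ((k:ℤ) - j)) * gaussG q j x * gaussG q ((k:ℤ) - j) y)
        + ∑ j ∈ Finset.range (k+1),
          q ^ (((x:ℤ)+1 - j) * ((k:ℤ) - j) + ((x:ℤ)+1 - j)) * gaussG q ((j:ℤ)-1) x * gaussG q ((k:ℤ) - j) y := by
      rw [← Finset.sum_add_distrib]
      refine Finset.sum_congr rfl fun j hj => ?_
      have hp := pascalA hq j ((x:ℤ)+1)
      simp only [add_sub_cancel_right] at hp
      rw [hp]
      have he : q ^ (((x:ℤ)+1 - j) * ((k:ℤ) - j) + ((x:ℤ)+1 - j))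
          = q ^ (((x:ℤ)+1 - j) * ((k:ℤ) - j)) * q ^ ((x:ℤ)+1 - j) := by
        rw [← zpow_add₀ hq0]
      rw [he]; ring
    rw [show (((x+1:ℕ):ℤ)) = ((x:ℕ):ℤ)+1 from by push_cast; ring]
    rw [R]
    -- remains: second sums equal
    congr 1
    -- Σ_j q^{(x-j)(k-j)} G j x G (k-j-1) y = Σ_j q^{(x+1-j)(k-j)+(x+1-j)} G (j-1) x G (k-j) y
    rw [Finset.sum_range_succ,
        show ((k:ℤ) - k - 1) = -1 from by ring, gaussG_neg_one, mul_zero, add_zero]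
    rw [Finset.sum_range_succ']
    simp only [Nat.cast_zero, CharP.cast_eq_zero, zero_sub, gaussG_neg_one, mul_zero, zero_mul, add_zero]
    refine Finset.sum_congr rfl fun i hi => ?_
    have hcast : ((i+1:ℕ):ℤ) = (i:ℤ)+1 := by push_cast; ring
    rw [hcast]
    have he : q ^ (((x:ℤ) - i) * ((k:ℤ) - i))
        = q ^ (((x:ℤ)+1 - ((i:ℤ)+1)) * ((k:ℤ) - ((i:ℤ)+1)) + ((x:ℤ)+1 - ((i:ℤ)+1))) := by
      congr 1; ring
    rw [he, show (i:ℤ)+1-1 = (i:ℤ) from by ring]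
    ring

lemma gsymm (hq : 2 ≤ q) {l a : ℕ} (h : l ≤ a) :
    gaussG q l a = gaussG q ((a:ℤ) - l) a := by
  have hc : ((a - l : ℕ) : ℤ) = (a:ℤ) - l := by omega
  have geq : gaussG q ((a:ℤ) - l) (a:ℤ) = Np q (a-l) (a:ℤ) / Np q (a-l) ((a-l:ℕ):ℤ) := by
    rw [← hc, gaussG_eq]
  rw [geq, gaussG_eq]
  have e1 : Np q a (a:ℤ) = Np q l a * Np q (a-l) ((a:ℤ) - l) := by
    have := Np_add (q := q) l (a - l) (a : ℤ)
    rwa [Nat.add_sub_cancel' h] at this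
  have e2 : Np q a (a:ℤ) = Np q (a-l) a * Np q l ((l:ℕ):ℤ) := by
    have := Np_add (q := q) (a - l) l (a : ℤ)
    rw [Nat.sub_add_cancel h] at this
    rw [this]
    congr 1
    rw [hc]
    ring
  have n1 : Np q l ((l:ℕ):ℤ) ≠ 0 := Np_ne_zero hq le_rfl
  have n2 : Np q (a-l) ((a - l : ℕ):ℤ) ≠ 0 := Np_ne_zero hq le_rfl
  rw [div_eq_div_iff n1 n2, hc]
  linear_combination e2 - e1

lemma gaussG_eq_add (i k : ℕ) (a : ℤ) :
    gaussG q ((i:ℤ)+(k:ℤ)) a = Np q (i+k) a / Np q (i+k) ((i:ℤ)+(k:ℤ)) := by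
  have h := gaussG_eq (q := q) (i+k) a
  push_cast at h
  rw [h]

lemma trinom (hq : 2 ≤ q) (i k : ℕ) (n : ℤ) :
    gaussG q i n * gaussG q k (n - i) = gaussG q ((i:ℤ)+(k:ℤ)) n * gaussG q i ((i:ℤ)+k) := by
  rw [gaussG_eq_add, gaussG_eq, gaussG_eq, gaussG_eq]
  have e1 : Np q (i+k) n = Np q i n * Np q k (n - i) := Np_add i k n
  have e2 : Np q (i+k) ((i:ℤ)+(k:ℤ)) = Np q i ((i:ℤ)+k) * Np q k (k:ℤ) := by
    have := Np_add (q := q) i k ((i:ℤ)+(k:ℤ))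
    rw [this]
    congr 1
    ring_nf
  have n1 : Np q i ((i:ℕ):ℤ) ≠ 0 := Np_ne_zero hq le_rfl
  have n2 : Np q k ((k:ℕ):ℤ) ≠ 0 := Np_ne_zero hq le_rfl
  have n3 : Np q (i+k) ((i:ℤ)+(k:ℤ)) ≠ 0 := by
    have := Np_ne_zero (q := q) hq (l := i+k) (a := ((i+k:ℕ):ℤ)) le_rfl
    push_cast at this
    exact this
  have n4 : Np q i ((i:ℤ)+(k:ℤ)) ≠ 0 := by
    intro h0
    rw [e2, h0, zero_mul] at n3
    exact n3 rfl
  field_simp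
  rw [e1, e2]
  ring

lemma Wid (hq : 2 ≤ q) (j d : ℕ) :
    gaussG q d ((d:ℤ)+j) =
      ∑ i ∈ Finset.range (j+1), q ^ ((i:ℤ)*i) * gaussG q i j * gaussG q i d := by
  have hv := vandermonde hq j j (d : ℤ)
  have lhs : gaussG q j ((j:ℤ) + d) = gaussG q d ((d:ℤ)+j) := by
    have h := gsymm (q := q) hq (l := j) (a := j + d) (by omega)
    push_cast at h
    rw [show (j:ℤ) + d = ((j:ℕ):ℤ) + ((d:ℕ):ℤ) from by push_cast; ring] at h ⊢
    rw [h]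
    rw [show ((j:ℕ):ℤ) + ((d:ℕ):ℤ) - ((j:ℕ):ℤ) = ((d:ℕ):ℤ) from by ring, add_comm]
  rw [← lhs, hv, ← Finset.sum_range_reflect]
  refine Finset.sum_congr rfl fun i hi => ?_
  have hij : i ≤ j := by have := Finset.mem_range.1 hi; omega
  have hc : ((j - i : ℕ) : ℤ) = (j:ℤ) - i := by omega
  rw [show j + 1 - 1 - i = j - i from by omega, hc]
  rw [show (j:ℤ) - ((j:ℤ) - i) = (i:ℤ) from by ring]
  have hsymm : gaussG q ((j:ℤ) - i) (j:ℤ) = gaussG q i (j:ℤ) := by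
    have h := gsymm (q := q) hq (l := j - i) (a := j) (by omega)
    rw [hc] at h
    rw [h, show (j:ℤ) - ((j:ℤ) - i) = (i:ℤ) from by ring]
  rw [hsymm]

lemma inner_sum (hq : 2 ≤ q) (m B d i : ℕ) (him : i ≤ m) :
    ∑ j ∈ Finset.range (m+1),
      q ^ (((m:ℤ)-j) * ((B:ℤ)-j)) * gaussG q ((m:ℤ)-j) ((d:ℤ) - B) *
        gaussG q i j * gaussG q j B
    = gaussG q i B * gaussG q ((m:ℤ)-i) ((d:ℤ)-i) := by
  have hsub : Finset.Ico i (m+1) ⊆ Finset.range (m+1) := by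
    rw [Finset.range_eq_Ico]
    exact Finset.Ico_subset_Ico (by omega) le_rfl
  rw [← Finset.sum_subset hsub (fun j hjm hj => by
    have h1 : j < m + 1 := Finset.mem_range.1 hjm
    have h2 : ¬ (i ≤ j ∧ j < m+1) := fun h => hj (Finset.mem_Ico.2 h)
    have h3 : j < i := by
      by_contra hcon
      exact h2 ⟨Nat.le_of_not_lt hcon, h1⟩
    have hji : (j:ℤ) < i := by exact_mod_cast h3
    rw [gaussG_vanish hq (by positivity) hji]
    ring)]
  rw [Finset.sum_Ico_eq_sum_range, show m + 1 - i = (m - i) + 1 from by omega]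
  have step : ∀ s ∈ Finset.range ((m-i)+1),
      q ^ (((m:ℤ)-(i+s:ℕ)) * ((B:ℤ)-(i+s:ℕ))) * gaussG q ((m:ℤ)-(i+s:ℕ)) ((d:ℤ) - B) *
        gaussG q i (i+s:ℕ) * gaussG q (i+s:ℕ) B
      = gaussG q i B *
          (q ^ (((B:ℤ)-i-s) * (((m-i:ℕ):ℤ)-s)) * gaussG q s ((B:ℤ)-i) *
            gaussG q (((m-i:ℕ):ℤ)-s) ((d:ℤ) - B)) := by
    intro s hs
    have ht := trinom hq i s ((B:ℕ):ℤ)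
    have hc1 : ((i+s:ℕ):ℤ) = (i:ℤ) + s := by push_cast; ring
    have hc2 : ((m-i:ℕ):ℤ) = (m:ℤ) - i := by omega
    rw [hc1, hc2,
      show (m:ℤ)-((i:ℤ)+s) = (m:ℤ)-i-s from by ring,
      show (B:ℤ)-((i:ℤ)+s) = (B:ℤ)-i-s from by ring,
      show ((m:ℤ)-i-s) * ((B:ℤ)-i-s) = ((B:ℤ)-i-s)*((m:ℤ)-i-s) from by ring]
    linear_combination (-(q ^ (((B:ℤ)-i-s) * ((m:ℤ)-i-s)) * gaussG q ((m:ℤ)-i-s) ((d:ℤ)-B))) * ht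
  rw [Finset.sum_congr rfl step, ← Finset.mul_sum]
  by_cases hiB : i ≤ B
  · congr 1
    have hv := vandermonde hq (m-i) (B-i) ((d:ℤ)-B)
    have hc3 : ((B-i:ℕ):ℤ) = (B:ℤ) - i := by omega
    have hc4 : ((m-i:ℕ):ℤ) = (m:ℤ) - i := by omega
    rw [hc3, hc4, show (B:ℤ) - i + ((d:ℤ) - B) = (d:ℤ) - i from by ring] at hv
    simp only [hc4]
    exact hv.symm
  · have h0 : gaussG q i (B:ℤ) = 0 :=
      gaussG_vanish hq (by positivity) (by exact_mod_cast by omega : (B:ℤ) < i)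
    rw [h0, zero_mul, zero_mul]

lemma key (hq : 2 ≤ q) (m B d : ℕ) :
    gaussG q m (d:ℤ) * gaussG q m ((B:ℤ) + m) =
      ∑ j ∈ Finset.range (m+1),
        q ^ (((m:ℤ)-j) * ((B:ℤ)-j)) * gaussG q ((m:ℤ)-j) ((d:ℤ) - B) *
          (gaussG q d ((d:ℤ)+j) * gaussG q j B) := by
  have step1 : ∀ j ∈ Finset.range (m+1),
      q ^ (((m:ℤ)-j) * ((B:ℤ)-j)) * gaussG q ((m:ℤ)-j) ((d:ℤ) - B) *
        (gaussG q d ((d:ℤ)+j) * gaussG q j B)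
      = ∑ i ∈ Finset.range (m+1),
          (q ^ ((i:ℤ)*i) * gaussG q i d) *
            (q ^ (((m:ℤ)-j) * ((B:ℤ)-j)) * gaussG q ((m:ℤ)-j) ((d:ℤ) - B) *
              gaussG q i j * gaussG q j B) := by
    intro j hj
    have hjm : j + 1 ≤ m + 1 := by have := Finset.mem_range.1 hj; omega
    rw [Wid hq j d]
    rw [Finset.sum_subset (Finset.range_subset_range.2 hjm) (fun i _ hi => by
      have h4 : ¬ i < j + 1 := fun h => hi (Finset.mem_range.2 h)
      have h5 : j < i := by omega
      have : (j:ℤ) < i := by exact_mod_cast h5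
      rw [gaussG_vanish hq (by positivity) this]
      ring)]
    rw [Finset.sum_mul, Finset.mul_sum]
    exact Finset.sum_congr rfl fun i _ => by ring
  rw [Finset.sum_congr rfl step1, Finset.sum_comm]
  have step2 : ∀ i ∈ Finset.range (m+1),
      ∑ j ∈ Finset.range (m+1),
        (q ^ ((i:ℤ)*i) * gaussG q i d) *
          (q ^ (((m:ℤ)-j) * ((B:ℤ)-j)) * gaussG q ((m:ℤ)-j) ((d:ℤ) - B) *
            gaussG q i j * gaussG q j B)
      = gaussG q m (d:ℤ) * (q ^ ((i:ℤ)*i) * gaussG q i m * gaussG q i B) := by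
    intro i hi
    have him : i ≤ m := by have := Finset.mem_range.1 hi; omega
    rw [← Finset.mul_sum, inner_sum hq m B d i him]
    have ht := trinom hq i (m-i) (d:ℤ)
    have hc : ((m-i:ℕ):ℤ) = (m:ℤ) - i := by omega
    rw [hc, show (i:ℤ) + ((m:ℤ)-i) = (m:ℤ) from by ring] at ht
    linear_combination (q ^ ((i:ℤ)*i) * gaussG q i (B:ℤ)) * ht
  rw [Finset.sum_congr rfl step2, ← Finset.mul_sum, ← Wid hq m B]
  have hs := gsymm (q := q) hq (l := B) (a := B + m) (by omega)
  have hc : ((B+m:ℕ):ℤ) = (B:ℤ) + m := by push_cast; ring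
  rw [hc] at hs
  rw [show (B:ℤ) + m - B = (m:ℤ) from by ring] at hs
  rw [hs]

lemma gaussG_vanish_int (hq : 2 ≤ q) {l a : ℤ} (h0 : 0 ≤ a) (h : a < l) : gaussG q l a = 0 := by
  have hl : l = ((l.toNat : ℕ) : ℤ) := by omega
  rw [hl]
  exact gaussG_vanish hq h0 (by omega)

end ARaux

open ARaux in
theorem AR_recursion (q : ℚ) (hq : 2 ≤ q) (t a b : ℤ) (ht : 1 ≤ t)
    (hb : 0 < b) (hba : b < a) (hat : a ≤ t) :
    (Function.support fun c : ℤ =>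
        q ^ (c * (2 * b - a + c)) * gaussG q c (t - 2 * b) *
          AR q t b (2 * b - a + c)).Finite ∧
      AR q t a b =
        ∑ᶠ c : ℤ, q ^ (c * (2 * b - a + c)) * gaussG q c (t - 2 * b) *
          AR q t b (2 * b - a + c) := by
  set f : ℤ → ℚ := fun c : ℤ =>
      q ^ (c * (2 * b - a + c)) * gaussG q c (t - 2 * b) * AR q t b (2 * b - a + c) with hf
  have hARj : ∀ j : ℤ, AR q t b (b - j) = gaussG q (t-b) (t-b+j) * gaussG q j b := by
    intro j
    rw [AR]
    by_cases hj : b - j < 0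
    · rw [if_pos (Or.inr hj)]
      have hz : gaussG q j b = 0 := gaussG_vanish_int hq (le_of_lt hb) (by omega)
      rw [hz, mul_zero]
    · rw [if_neg (by omega)]
      rw [show t - (b - j) = t - b + j from by ring, show b - (b - j) = j from by ring]
  have hsupp : Function.support f ⊆ ↑(Finset.Icc (0:ℤ) (a-b)) := by
    intro c hc
    simp only [Function.mem_support] at hc
    simp only [Finset.coe_Icc, Set.mem_Icc]
    by_contra h
    push_neg at h
    rcases lt_or_ge c 0 with h0 | h0
    · exact hc (by rw [hf]; simp only; rw [gaussG_neg h0]; ring)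
    · have hgt : a - b < c := h h0
      apply hc
      rw [hf]
      simp only
      rw [show 2*b - a + c = b - (a - b - c) from by ring, hARj (a-b-c)]
      rw [gaussG_neg (by omega : a - b - c < 0)]
      ring
  refine ⟨Set.Finite.subset (Finset.Icc (0:ℤ) (a-b)).finite_toSet hsupp, ?_⟩
  rw [finsum_eq_finset_sum_of_support_subset f hsupp]
  set m : ℕ := (a-b).toNat with hmdef
  set B : ℕ := b.toNat with hBdef
  set d : ℕ := (t-b).toNat with hddef
  have hm : ((m:ℕ):ℤ) = a - b := by omega
  have hB : ((B:ℕ):ℤ) = b := by omega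
  have hd : ((d:ℕ):ℤ) = t - b := by omega
  have hIcc : ∑ c ∈ Finset.Icc (0:ℤ) (a-b), f c = ∑ n ∈ Finset.range (m+1), f n := by
    refine (Finset.sum_nbij' (fun n : ℕ => (n:ℤ)) (fun c : ℤ => c.toNat) ?_ ?_ ?_ ?_ ?_).symm
    · intro n hn
      have := Finset.mem_range.1 hn
      simp only [Finset.mem_Icc]
      omega
    · intro c hc
      have := Finset.mem_Icc.1 hc
      simp only [Finset.mem_range]
      omega
    · intro n hn
      simp
    · intro c hc
      have := Finset.mem_Icc.1 hc
      show ((c.toNat : ℕ) : ℤ) = c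
      omega
    · intro n hn
      rfl
  rw [hIcc, ← Finset.sum_range_reflect]
  have lhs : AR q t a b = gaussG q m (d:ℤ) * gaussG q m ((B:ℤ) + m) := by
    rw [AR, if_neg (by omega)]
    congr 1
    · have hsym := gsymm (q := q) hq (l := m) (a := d) (by omega)
      rw [hsym]
      congr 1 <;> omega
    · congr 1 <;> omega
  rw [lhs, key hq m B d]
  refine Finset.sum_congr rfl fun j hj => ?_
  have hjm : j ≤ m := by have := Finset.mem_range.1 hj; omega
  rw [show m + 1 - 1 - j = m - j from by omega]
  rw [hf]
  simp only
  have hc1 : ((m - j : ℕ) : ℤ) = a - b - j := by omega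
  rw [hc1]
  rw [show 2*b - a + (a - b - (j:ℤ)) = b - (j:ℤ) from by ring, hARj (j:ℤ)]
  rw [← hm, ← hB]
  rw [show t - 2*(B:ℤ) = (d:ℤ) - B from by omega]
  rw [show t - (B:ℤ) = (d:ℤ) from by omega]
end

section
/- For every prime power q and integers n ≥ 0, 0 ≤ b ≤ n+1, the number of submodules of dimension vector (n, b) of the preinjective Kronecker module I_n over 𝔽_q equals the Gaussian coefficient G^{n+1−b}_{n+1}(q). -/
/-- The number of subrepresentations of dimension vector `(a, b)` of the Kronecker
representation given by the two linear maps `α β : V₂ →ₗ[k] V₁` (vertex 1 is the sink). -/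
noncomputable def subrepCard {k : Type} [Field k] {V₁ V₂ : Type}
    [AddCommGroup V₁] [Module k V₁] [AddCommGroup V₂] [Module k V₂]
    (α β : V₂ →ₗ[k] V₁) (a b : ℕ) : ℕ :=
  Nat.card {U : Submodule k V₁ × Submodule k V₂ //
    (∀ x ∈ U.2, α x ∈ U.1) ∧ (∀ x ∈ U.2, β x ∈ U.1) ∧
    Module.finrank k U.1 = a ∧ Module.finrank k U.2 = b}

/-- First structure map of the preinjective Kronecker module `I_n`
(of dimension vector `(n, n+1)`): deletes the last coordinate. -/
noncomputable def alphaI (k : Type) [Field k] (n : ℕ) :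
    (Fin (n + 1) → k) →ₗ[k] (Fin n → k) :=
  Matrix.toLin'
    (Matrix.of fun (i : Fin n) (j : Fin (n + 1)) => if (i : ℕ) = (j : ℕ) then 1 else 0)

/-- Second structure map of the preinjective Kronecker module `I_n`:
deletes the first coordinate. -/
noncomputable def betaI (k : Type) [Field k] (n : ℕ) :
    (Fin (n + 1) → k) →ₗ[k] (Fin n → k) :=
  Matrix.toLin'
    (Matrix.of fun (i : Fin n) (j : Fin (n + 1)) => if (j : ℕ) = (i : ℕ) + 1 then 1 else 0)

open Module Submodule

section Count

variable {k V : Type} [Field k] [Fintype k] [AddCommGroup V] [Module k V] [Finite V]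

attribute [local instance] Fintype.ofFinite

/-- Sending a linearly independent tuple to its span. -/
noncomputable def spanMap (b : ℕ) :
    {s : Fin b → V // LinearIndependent k s} → {U : Submodule k V // finrank k U = b} :=
  fun s => ⟨span k (Set.range s.1), by
    rw [finrank_span_eq_card s.2, Fintype.card_fin]⟩

/-- The fiber of `spanMap` over `u` is the set of linearly independent tuples in `u`. -/
noncomputable def fiberEquiv (b : ℕ)
    (u : {U : Submodule k V // finrank k U = b}) :
    {s : {s : Fin b → V // LinearIndependent k s} // spanMap b s = u} ≃
      {t : Fin b → u.1 // LinearIndependent k t} where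
  toFun s := ⟨fun i => ⟨s.1.1 i, by
      have h : span k (Set.range s.1.1) = u.1 := congrArg Subtype.val s.2
      exact h ▸ subset_span (Set.mem_range_self i)⟩,
    LinearIndependent.of_comp u.1.subtype s.1.2⟩
  invFun t := ⟨⟨fun i => (t.1 i : V), t.2.map' u.1.subtype (ker_subtype _)⟩, by
    apply Subtype.ext
    show span k (Set.range fun i => ((t.1 i : V))) = u.1
    have : (Set.range fun i => ((t.1 i : V))) = u.1.subtype '' Set.range t.1 := by
      rw [← Set.range_comp]; rfl
    rw [this, ← Submodule.map_span]
    have htop : span k (Set.range t.1) = ⊤ :=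
      Submodule.eq_top_of_finrank_eq
        (by rw [finrank_span_eq_card t.2, Fintype.card_fin, u.2])
    rw [htop, Submodule.map_top, range_subtype]⟩
  left_inv s := by apply Subtype.ext; apply Subtype.ext; rfl
  right_inv t := by apply Subtype.ext; rfl

/-- The number of `b`-dimensional subspaces of a finite vector space, as a product formula. -/
theorem count_subspaces (b : ℕ) (hb : b ≤ finrank k V) :
    Nat.card {U : Submodule k V // finrank k U = b} *
      ∏ i ∈ Finset.range b, (Fintype.card k ^ b - Fintype.card k ^ i) =
    ∏ i ∈ Finset.range b, (Fintype.card k ^ finrank k V - Fintype.card k ^ i) := by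
  have key := card_linearIndependent (K := k) (V := V) (k := b) hb
  rw [Nat.card_congr (Equiv.sigmaFiberEquiv (spanMap (k := k) (V := V) b)).symm] at key
  rw [Nat.card_eq_fintype_card, Fintype.card_sigma] at key
  have hfib : ∀ u : {U : Submodule k V // finrank k U = b},
      Fintype.card {s // spanMap b s = u} =
        ∏ i ∈ Finset.range b, (Fintype.card k ^ b - Fintype.card k ^ i) := by
    intro u
    rw [Fintype.card_congr (fiberEquiv b u), ← Nat.card_eq_fintype_card,
      card_linearIndependent (K := k) (V := u.1) (k := b) (by rw [u.2])]
    rw [u.2]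
    exact Fin.prod_univ_eq_prod_range (fun i => Fintype.card k ^ b - Fintype.card k ^ i) b
  rw [Finset.sum_congr rfl (fun u _ => hfib u), Finset.sum_const, Finset.card_univ,
    smul_eq_mul, ← Nat.card_eq_fintype_card] at key
  rw [key]
  exact Fin.prod_univ_eq_prod_range
    (fun i => Fintype.card k ^ finrank k V - Fintype.card k ^ i) b

end Count

/-- The `q`-factorial-like product `∏_{j=1}^m (Q^j - 1)`. -/
noncomputable def qfac (Q : ℚ) (m : ℕ) : ℚ := ∏ j ∈ Finset.range m, (Q ^ (j + 1) - 1)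

theorem qfac_split (Q : ℚ) {c m : ℕ} (hc : c ≤ m) :
    (∏ i ∈ Finset.range c, (Q ^ (m - i) - 1)) * qfac Q (m - c) = qfac Q m := by
  obtain ⟨d, rfl⟩ : ∃ d, m = d + c := ⟨m - c, (Nat.sub_add_cancel hc).symm⟩
  rw [Nat.add_sub_cancel]
  have h1 : (∏ i ∈ Finset.range c, (Q ^ (d + c - i) - 1)) =
      ∏ i ∈ Finset.range c, (Q ^ (d + i + 1) - 1) := by
    rw [← Finset.prod_range_reflect (fun i => Q ^ (d + i + 1) - 1) c]
    apply Finset.prod_congr rfl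
    intro i hi
    rw [Finset.mem_range] at hi
    congr 2
    omega
  rw [h1, qfac, qfac, mul_comm, ← Finset.prod_range_add (fun j => Q ^ (j + 1) - 1) d c]

theorem qfac_ne_zero {Q : ℚ} (hQ : 1 < Q) (m : ℕ) : qfac Q m ≠ 0 := by
  apply Finset.prod_ne_zero_iff.2
  intro j _
  have : 1 < Q ^ (j + 1) := one_lt_pow₀ hQ (Nat.succ_ne_zero j)
  linarith

/-- The subrepresentations of `I_n` of dimension vector `(n, b)` are exactly the
`b`-dimensional subspaces at the source vertex. -/
noncomputable def subrepEquiv (k : Type) [Field k] [Fintype k] (n b : ℕ) :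
    {U : Submodule k (Fin n → k) × Submodule k (Fin (n + 1) → k) //
      (∀ x ∈ U.2, alphaI k n x ∈ U.1) ∧ (∀ x ∈ U.2, betaI k n x ∈ U.1) ∧
      Module.finrank k U.1 = n ∧ Module.finrank k U.2 = b} ≃
    {U : Submodule k (Fin (n + 1) → k) // finrank k U = b} where
  toFun p := ⟨p.1.2, p.2.2.2.2⟩
  invFun U := ⟨(⊤, U.1), fun x _ => trivial, fun x _ => trivial, by
    rw [finrank_top, Module.finrank_fintype_fun_eq_card, Fintype.card_fin], U.2⟩
  left_inv p := by
    apply Subtype.ext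
    have htop : p.1.1 = ⊤ :=
      Submodule.eq_top_of_finrank_eq (by
        rw [p.2.2.2.1, Module.finrank_fintype_fun_eq_card, Fintype.card_fin])
    exact Prod.ext htop.symm rfl
  right_inv U := rfl

/-- The number of submodules of dimension vector `(n, b)` of the preinjective Kronecker
module `I_n` over a finite field with `q` elements equals `G^{n+1-b}_{n+1}(q)`. -/
theorem preinjective_subrepCard_dim_n_b (k : Type) [Field k] [Fintype k]
    (n b : ℕ) (hb : b ≤ n + 1) :
    (subrepCard (alphaI k n) (betaI k n) n b : ℚ) =
      gaussG (Fintype.card k : ℚ) ((n : ℤ) + 1 - (b : ℤ)) ((n : ℤ) + 1) := by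
  set q := Fintype.card k with hq
  set Q : ℚ := (q : ℚ) with hQdef
  have hq2 : 2 ≤ q := Fintype.one_lt_card
  have hQ : 1 < Q := by rw [hQdef]; exact_mod_cast hq2
  have hQ0 : 0 < Q := lt_trans one_pos hQ
  -- Step 1: reduce to counting subspaces
  have hN : subrepCard (alphaI k n) (betaI k n) n b =
      Nat.card {U : Submodule k (Fin (n + 1) → k) // finrank k U = b} := by
    rw [subrepCard]
    exact Nat.card_congr (subrepEquiv k n b)
  set N := Nat.card {U : Submodule k (Fin (n + 1) → k) // finrank k U = b} with hNdef
  -- Step 2: counting formula over ℕ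
  have hfr : finrank k (Fin (n + 1) → k) = n + 1 := by
    rw [Module.finrank_fintype_fun_eq_card, Fintype.card_fin]
  have key : N * ∏ i ∈ Finset.range b, (q ^ b - q ^ i) =
      ∏ i ∈ Finset.range b, (q ^ (n + 1) - q ^ i) := by
    have := count_subspaces (k := k) (V := Fin (n + 1) → k) b (by rw [hfr]; exact hb)
    rwa [hfr] at this
  -- Step 3: cast to ℚ
  have hcast : ∀ m : ℕ, b ≤ m →
      ((∏ i ∈ Finset.range b, (q ^ m - q ^ i) : ℕ) : ℚ) =
        (∏ i ∈ Finset.range b, Q ^ i) * ∏ i ∈ Finset.range b, (Q ^ (m - i) - 1) := by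
    intro m hm
    rw [Nat.cast_prod, ← Finset.prod_mul_distrib]
    apply Finset.prod_congr rfl
    intro i hi
    rw [Finset.mem_range] at hi
    have hile : i ≤ m := le_trans (le_of_lt hi) hm
    rw [Nat.cast_sub (pow_le_pow_right₀ (le_trans one_le_two hq2) hile)]
    push_cast
    rw [mul_sub, mul_one, ← pow_add]
    congr 2
    omega
  have keyQ : (N : ℚ) * ((∏ i ∈ Finset.range b, Q ^ i) *
        ∏ i ∈ Finset.range b, (Q ^ (b - i) - 1)) =
      (∏ i ∈ Finset.range b, Q ^ i) * ∏ i ∈ Finset.range b, (Q ^ (n + 1 - i) - 1) := by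
    rw [← hcast b le_rfl, ← hcast (n + 1) hb, ← Nat.cast_mul, key]
  have hE : (∏ i ∈ Finset.range b, Q ^ i) ≠ 0 :=
    Finset.prod_ne_zero_iff.2 fun i _ => pow_ne_zero i (ne_of_gt hQ0)
  have hprodb : (∏ i ∈ Finset.range b, (Q ^ (b - i) - 1)) = qfac Q b := by
    have := qfac_split Q (le_refl b)
    rwa [Nat.sub_self, qfac, Finset.range_zero, Finset.prod_empty, mul_one] at this
  have hprodn : (∏ i ∈ Finset.range b, (Q ^ (n + 1 - i) - 1)) * qfac Q (n + 1 - b) =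
      qfac Q (n + 1) := qfac_split Q hb
  -- N * qfac b * qfac (n+1-b) = qfac (n+1)
  have main : (N : ℚ) * qfac Q b * qfac Q (n + 1 - b) = qfac Q (n + 1) := by
    rw [← hprodn, ← hprodb]
    have h := mul_left_cancel₀ hE (by linarith [keyQ] :
      (∏ i ∈ Finset.range b, Q ^ i) * ((N : ℚ) * ∏ i ∈ Finset.range b, (Q ^ (b - i) - 1)) =
      (∏ i ∈ Finset.range b, Q ^ i) * ∏ i ∈ Finset.range b, (Q ^ (n + 1 - i) - 1))
    rw [h]
  -- Step 4: compute the right-hand side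
  have hl : ¬ ((n : ℤ) + 1 - (b : ℤ) < 0) := by omega
  have hlt : ((n : ℤ) + 1 - (b : ℤ)).toNat = n + 1 - b := by omega
  rw [gaussG, if_neg hl, hlt]
  have hnum : (∏ i ∈ Finset.range (n + 1 - b), (Q ^ ((n : ℤ) + 1 - (i : ℤ)) - 1)) =
      ∏ i ∈ Finset.range (n + 1 - b), (Q ^ (n + 1 - i) - 1) := by
    apply Finset.prod_congr rfl
    intro i hi
    rw [Finset.mem_range] at hi
    have : (n : ℤ) + 1 - (i : ℤ) = ((n + 1 - i : ℕ) : ℤ) := by omega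
    rw [this, zpow_natCast]
  have hden : (∏ i ∈ Finset.range (n + 1 - b), (Q ^ ((n : ℤ) + 1 - (b : ℤ) - (i : ℤ)) - 1)) =
      ∏ i ∈ Finset.range (n + 1 - b), (Q ^ (n + 1 - b - i) - 1) := by
    apply Finset.prod_congr rfl
    intro i hi
    rw [Finset.mem_range] at hi
    have : (n : ℤ) + 1 - (b : ℤ) - (i : ℤ) = ((n + 1 - b - i : ℕ) : ℤ) := by omega
    rw [this, zpow_natCast]
  rw [hnum, hden]
  have hnum2 : (∏ i ∈ Finset.range (n + 1 - b), (Q ^ (n + 1 - i) - 1)) * qfac Q b =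
      qfac Q (n + 1) := by
    have := qfac_split Q (Nat.sub_le (n + 1) b)
    rwa [Nat.sub_sub_self hb] at this
  have hden2 : (∏ i ∈ Finset.range (n + 1 - b), (Q ^ (n + 1 - b - i) - 1)) =
      qfac Q (n + 1 - b) := by
    have := qfac_split Q (le_refl (n + 1 - b))
    rwa [Nat.sub_self, qfac, Finset.range_zero, Finset.prod_empty, mul_one] at this
  rw [hden2]
  rw [hN]
  have hb0 := qfac_ne_zero hQ b
  have hl0 := qfac_ne_zero hQ (n + 1 - b)
  rw [eq_div_iff hl0]
  apply mul_right_cancel₀ hb0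
  rw [show ((N : ℚ) * qfac Q (n + 1 - b)) * qfac Q b
      = (N : ℚ) * qfac Q b * qfac Q (n + 1 - b) by ring, main, ← hnum2]
end

section
/- Define for integers n ≥ 0 and a, b ∈ ℤ: B(a,b) = 0 if a > n or b > n+1; B(n, n+1) = 1; otherwise B(a,b) = G^{a−b}_{n−b}(q)·G^b_{a+1}(q). Then for all n ≥ 1 and integers a ≤ n, b ≤ n+1 with a < n, the recursion B^{(n)}(a,b) = Σ_{d∈ℤ} q^{d(n−1−2a+b+d)} G^d_{2a−n+1}(q) · B^{(n−1)}(2a−b−d, a) holds. -/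
namespace AuxBI
variable {q : ℚ}
lemma q_ne (hq : 2 ≤ q) : q ≠ 0 := by positivity
lemma zpow_gt_one (hq : 2 ≤ q) {k : ℤ} (hk : 1 ≤ k) : 1 < q ^ k := by
  calc (1:ℚ) = q ^ (0:ℤ) := (zpow_zero q).symm
  _ < q ^ k := zpow_lt_zpow_right₀ (by linarith) (by omega)
lemma sub_one_ne (hq : 2 ≤ q) {k : ℤ} (hk : 1 ≤ k) : q ^ k - 1 ≠ 0 :=
  sub_ne_zero.mpr (ne_of_gt (zpow_gt_one hq hk))
noncomputable def N (q : ℚ) (l : ℕ) (a : ℤ) : ℚ := ∏ i ∈ Finset.range l, (q ^ (a - (i : ℤ)) - 1)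
lemma gaussG_natCast (l : ℕ) (a : ℤ) : gaussG q l a = N q l a / N q l l := by
  simp [gaussG, N, Int.toNat_natCast]

-- new part
noncomputable def qfac (q : ℚ) (k : ℕ) : ℚ := ∏ i ∈ Finset.range k, (q ^ ((i : ℤ) + 1) - 1)

lemma qfac_ne (hq : 2 ≤ q) (k : ℕ) : qfac q k ≠ 0 :=
  Finset.prod_ne_zero_iff.mpr fun i _ => sub_one_ne hq (by omega)

lemma qfac_succ (k : ℕ) : qfac q (k+1) = qfac q k * (q ^ ((k:ℤ) + 1) - 1) := by
  simp [qfac, Finset.prod_range_succ]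

lemma N_succ' (l : ℕ) (a : ℤ) : N q (l+1) a = (q ^ a - 1) * N q l (a - 1) := by
  rw [N, Finset.prod_range_succ']
  simp only [Nat.cast_zero, sub_zero, Nat.cast_add, Nat.cast_one]
  rw [mul_comm, N]
  congr 1
  apply Finset.prod_congr rfl
  intro i _
  ring_nf

lemma N_succ (l : ℕ) (a : ℤ) : N q (l+1) a = N q l a * (q ^ (a - l) - 1) := by
  rw [N, Finset.prod_range_succ, N]

lemma N_mul_qfac (l n : ℕ) (h : l ≤ n) : N q l n * qfac q (n - l) = qfac q n := by
  induction l with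
  | zero => simp [N]
  | succ l ih =>
    have hl : l ≤ n := by omega
    have h1 : n - l = (n - (l+1)) + 1 := by omega
    rw [N_succ, mul_right_comm]
    have h2 : qfac q (n - l) = qfac q (n - (l+1)) * (q ^ ((n:ℤ) - l) - 1) := by
      rw [h1, qfac_succ]
      have h3 : ((n - (l+1) : ℕ) : ℤ) + 1 = (n:ℤ) - l := by omega
      rw [h3]
    rw [mul_assoc, ← h2, ih hl]

lemma qfac_zero : qfac q 0 = 1 := by simp [qfac]

lemma N_self_eq (l : ℕ) : N q l l = qfac q l := by
  simpa [qfac_zero] using N_mul_qfac (q := q) l l le_rfl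

lemma gb_eq (hq : 2 ≤ q) {l n : ℕ} (h : l ≤ n) :
    gaussG q l n = qfac q n / (qfac q l * qfac q (n - l)) := by
  rw [gaussG_natCast, N_self_eq]
  have h1 : N q l n = qfac q n / qfac q (n - l) := by
    rw [eq_div_iff (qfac_ne hq _), N_mul_qfac l n h]
  rw [h1]
  field_simp

end AuxBI

namespace AuxBI
variable {q : ℚ}

lemma N_ne (hq : 2 ≤ q) (l : ℕ) : AuxBI.N q l l ≠ 0 := by
  rw [N_self_eq]; exact qfac_ne hq l

lemma gaussG_neg {l : ℤ} (hl : l < 0) (a : ℤ) : gaussG q l a = 0 := by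
  simp [gaussG, hl]

lemma gaussG_zero_top (a : ℤ) : gaussG q 0 a = 1 := by
  simp [gaussG]

lemma gaussG_zero_of_lt (hq : 2 ≤ q) {l a : ℤ} (ha : 0 ≤ a) (h : a < l) : gaussG q l a = 0 := by
  have hl : ¬ l < 0 := by omega
  simp only [gaussG, if_neg hl]
  apply div_eq_zero_iff.mpr
  left
  apply Finset.prod_eq_zero (i := a.toNat)
  · simp [Finset.mem_range]; omega
  · rw [Int.toNat_of_nonneg ha]
    simp

lemma pascal_succ (hq : 2 ≤ q) (l : ℕ) (a : ℤ) :
    gaussG q ((l:ℤ)+1) a = gaussG q l (a-1) + q ^ ((l:ℤ)+1) * gaussG q ((l:ℤ)+1) (a-1) := by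
  have hcast : ((l:ℤ)+1) = ((l+1 : ℕ) : ℤ) := by push_cast; ring
  rw [hcast, gaussG_natCast, gaussG_natCast, gaussG_natCast]
  have h1 : N q (l+1) a = (q ^ a - 1) * N q l (a - 1) := N_succ' l a
  have h2 : N q (l+1) ((l+1 : ℕ):ℤ) = (q ^ ((l:ℤ)+1) - 1) * N q l l := by
    have := N_succ' (q := q) l ((l:ℤ)+1)
    simpa using this
  have h3 : N q (l+1) (a-1) = N q l (a-1) * (q ^ (a-1-l) - 1) := N_succ l (a-1)
  rw [h1, h3]
  rw [show ((l+1:ℕ):ℤ) = (l:ℤ)+1 by push_cast; ring] at h2 ⊢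
  rw [h2]
  have hD : N q l l ≠ 0 := N_ne hq l
  have hL : q ^ ((l:ℤ)+1) - 1 ≠ 0 := sub_one_ne hq (by omega)
  set X := N q l (a-1) with hX
  set D := N q l l with hDd
  set u := q ^ a with hu
  set v := q ^ ((l:ℤ)+1) with hv
  set w := q ^ (a-1-(l:ℤ)) with hw
  have hzp : v * w = u := by
    rw [hv, hw, hu, ← zpow_add₀ (by positivity : q ≠ 0)]; ring_nf
  field_simp
  linear_combination (-X) * hzp

lemma pascal_int (hq : 2 ≤ q) {l : ℤ} (hl : 0 ≤ l) (a : ℤ) :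
    gaussG q l a = gaussG q (l-1) (a-1) + q ^ l * gaussG q l (a-1) := by
  lift l to ℕ using hl
  cases l with
  | zero =>
    rw [show ((0:ℕ):ℤ) = (0:ℤ) by simp]
    rw [gaussG_neg (by omega : (0:ℤ)-1 < 0), gaussG_zero_top, gaussG_zero_top]
    simp
  | succ l =>
    have hcast : ((l+1 : ℕ) : ℤ) = (l:ℤ)+1 := by push_cast; ring
    rw [hcast, show (l:ℤ)+1-1 = (l:ℤ) by ring]
    exact pascal_succ hq l a

end AuxBI

namespace AuxBI
variable {q : ℚ}

lemma vandermonde (hq : 2 ≤ q) (w : ℕ) : ∀ (P : ℕ) (z : ℤ),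
    ∑ d ∈ Finset.range (P+1),
        q ^ ((d:ℤ) * ((w:ℤ) - P + d)) * gaussG q d z * gaussG q ((P:ℤ) - d) w
      = gaussG q P (z + w) := by
  induction w with
  | zero =>
    intro P z
    simp only [Nat.cast_zero]
    rw [Finset.sum_eq_single_of_mem P (Finset.self_mem_range_succ P)]
    · rw [show ((P:ℤ) - P) = 0 by ring, gaussG_zero_top,
        show ((P:ℤ) * ((0:ℤ) - (P:ℤ) + P)) = 0 by ring]
      simp
    · intro b hb hbP
      simp only [Finset.mem_range] at hb
      rw [gaussG_zero_of_lt hq (le_refl (0:ℤ)) (by omega : (0:ℤ) < (P:ℤ) - b)]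
      ring
  | succ w ih =>
    intro P z
    cases P with
    | zero =>
      simp [gaussG_zero_top]
    | succ P =>
      have key : ∀ d ∈ Finset.range (P+1+1),
          q ^ ((d:ℤ) * (((w+1:ℕ):ℤ) - ((P+1:ℕ):ℤ) + d)) * gaussG q d z *
              gaussG q (((P+1:ℕ):ℤ) - d) ((w+1:ℕ):ℤ)
            = q ^ ((d:ℤ) * ((w:ℤ) - P + d)) * gaussG q d z * gaussG q ((P:ℤ) - d) w
              + q ^ ((P:ℤ)+1) *
                (q ^ ((d:ℤ) * ((w:ℤ) - ((P+1:ℕ):ℤ) + d)) * gaussG q d z *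
                  gaussG q (((P+1:ℕ):ℤ) - d) w) := by
        intro d hd
        simp only [Finset.mem_range] at hd
        have h0 : (0:ℤ) ≤ ((P+1:ℕ):ℤ) - d := by push_cast; omega
        rw [pascal_int hq h0 ((w+1:ℕ):ℤ)]
        rw [show ((w+1:ℕ):ℤ) - 1 = (w:ℤ) by push_cast; ring]
        rw [mul_add, mul_add]
        congr 1
        · rw [show ((P+1:ℕ):ℤ) - d - 1 = (P:ℤ) - d by push_cast; ring]
          congr 2
          congr 1
          push_cast; ring
        · rw [← mul_assoc, ← mul_assoc, ← mul_assoc]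
          congr 1
          rw [mul_comm _ (q ^ (((P+1:ℕ):ℤ) - d)), ← mul_assoc, ← zpow_add₀ (by positivity : q ≠ 0),
            mul_comm (q ^ ((P:ℤ)+1)) _, ← zpow_add₀ (by positivity : q ≠ 0)]
          congr 2
          push_cast; ring
      rw [Finset.sum_congr rfl key, Finset.sum_add_distrib, ← Finset.mul_sum]
      have hA : ∑ d ∈ Finset.range (P+1+1),
          q ^ ((d:ℤ) * ((w:ℤ) - P + d)) * gaussG q d z * gaussG q ((P:ℤ) - d) w
            = gaussG q P (z + w) := by
        rw [Finset.sum_range_succ]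
        rw [show ((P:ℤ) - ((P+1:ℕ):ℤ)) = -1 by push_cast; ring] at *
        rw [gaussG_neg (by omega : (-1:ℤ) < 0)]
        rw [mul_zero, add_zero]
        exact ih P z
      rw [hA, ih (P+1) z]
      have := pascal_int hq (by positivity : (0:ℤ) ≤ ((P+1:ℕ):ℤ)) (z + ((w+1:ℕ):ℤ))
      rw [show ((P+1:ℕ):ℤ) - 1 = (P:ℤ) by push_cast; ring,
        show z + ((w+1:ℕ):ℤ) - 1 = z + w by push_cast; ring] at this
      rw [show ((P+1:ℕ):ℤ) = (P:ℤ)+1 by push_cast; ring] at this ⊢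
      rw [this]


end AuxBI

namespace AuxBI
variable {q : ℚ}

lemma tri (hq : 2 ≤ q) (C e : ℕ) {m : ℤ} (hm : 0 ≤ m) :
    gaussG q m C * gaussG q e m = gaussG q e C * gaussG q (m - e) ((C:ℤ) - e) := by
  lift m to ℕ using hm
  rcases le_or_gt (e:ℤ) (m:ℤ) with hem | hem
  · rcases le_or_gt (m:ℤ) (C:ℤ) with hmc | hmc
    · -- e ≤ m ≤ C : factorial computation
      have hem' : e ≤ m := by exact_mod_cast hem
      have hmc' : m ≤ C := by exact_mod_cast hmc
      have hec' : e ≤ C := le_trans hem' hmc'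
      rw [show ((m:ℤ) - e) = ((m - e : ℕ) : ℤ) by omega,
        show ((C:ℤ) - e) = ((C - e : ℕ) : ℤ) by omega]
      rw [gb_eq hq hmc', gb_eq hq hem', gb_eq hq hec',
        gb_eq hq (show m - e ≤ C - e by omega)]
      rw [show C - e - (m - e) = C - m by omega]
      have h1 := qfac_ne hq (C - m)
      have h2 := qfac_ne hq (m - e)
      have h3 := qfac_ne hq e
      have h4 := qfac_ne hq m
      have h5 := qfac_ne hq (C - e)
      field_simp
    · -- C < m
      rw [gaussG_zero_of_lt hq (by positivity) hmc, zero_mul]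
      rcases le_or_gt (e:ℤ) (C:ℤ) with hec | hec
      · rw [gaussG_zero_of_lt hq (by omega : (0:ℤ) ≤ (C:ℤ) - e) (by omega), mul_zero]
      · rw [gaussG_zero_of_lt hq (by positivity) hec, zero_mul]
  · -- m < e
    rw [gaussG_zero_of_lt hq (by positivity) hem, mul_zero,
      gaussG_neg (by omega : (m:ℤ) - e < 0), mul_zero]

lemma step5 (hq : 2 ≤ q) {e A P : ℕ} (he : e ≤ A) (hp : P ≤ A) :
    gaussG q ((A:ℤ) - e) ((A:ℤ) + 1) * gaussG q ((P:ℤ) - e) ((A:ℤ) - e)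
      = gaussG q ((P:ℤ) - e) ((P:ℤ) + 1) * gaussG q ((A:ℤ) - P) ((A:ℤ) + 1) := by
  rcases le_or_gt (e:ℤ) (P:ℤ) with hep | hep
  · have hep' : e ≤ P := by exact_mod_cast hep
    rw [show ((A:ℤ) - e) = ((A - e : ℕ) : ℤ) by omega,
      show ((P:ℤ) - e) = ((P - e : ℕ) : ℤ) by omega,
      show ((A:ℤ) + 1) = ((A + 1 : ℕ) : ℤ) by omega,
      show ((P:ℤ) + 1) = ((P + 1 : ℕ) : ℤ) by omega,
      show ((A:ℤ) - P) = ((A - P : ℕ) : ℤ) by omega]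
    rw [gb_eq hq (show A - e ≤ A + 1 by omega), gb_eq hq (show P - e ≤ A - e by omega),
      gb_eq hq (show P - e ≤ P + 1 by omega), gb_eq hq (show A - P ≤ A + 1 by omega)]
    rw [show A + 1 - (A - e) = e + 1 by omega, show A - e - (P - e) = A - P by omega,
      show P + 1 - (P - e) = e + 1 by omega, show A + 1 - (A - P) = P + 1 by omega]
    have h1 := qfac_ne hq (e + 1)
    have h2 := qfac_ne hq (A - P)
    have h3 := qfac_ne hq (P - e)
    have h4 := qfac_ne hq (A - e)
    have h5 := qfac_ne hq (P + 1)
    field_simp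
  · rw [gaussG_neg (by omega : (P:ℤ) - e < 0), mul_zero,
      gaussG_neg (by omega : (P:ℤ) - e < 0), zero_mul]

end AuxBI

namespace AuxBI
variable {q : ℚ}

lemma inner_sum (hq : 2 ≤ q) (A C P e : ℕ) (heC : e ≤ C) :
    ∑ d ∈ Finset.range (P+1),
        q ^ ((d:ℤ) * ((C:ℤ) - P + d)) * gaussG q d ((A:ℤ) - C) *
          gaussG q ((P:ℤ) - e - d) ((C:ℤ) - e)
      = gaussG q ((P:ℤ) - e) ((A:ℤ) - e) := by
  rcases le_or_gt e P with heP | heP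
  · have hsub : Finset.range (P - e + 1) ⊆ Finset.range (P + 1) :=
      Finset.range_subset_range.mpr (by omega)
    rw [← Finset.sum_subset hsub (by
      intro d hd hnd
      simp only [Finset.mem_range] at hd hnd
      rw [gaussG_neg (by omega : (P:ℤ) - e - d < 0)]
      ring)]
    have hvan := vandermonde hq (C - e) (P - e) ((A:ℤ) - C)
    rw [show ((A:ℤ) - C + ((C - e : ℕ):ℤ)) = (A:ℤ) - e by omega] at hvan
    rw [show ((P:ℤ) - e) = ((P - e : ℕ) : ℤ) by omega, ← hvan]
    apply Finset.sum_congr rfl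
    intro d hd
    simp only [Finset.mem_range] at hd
    rw [show ((C - e : ℕ):ℤ) - ((P - e : ℕ):ℤ) + (d:ℤ) = (C:ℤ) - P + d by omega,
      show ((P - e : ℕ):ℤ) - (d:ℤ) = (P:ℤ) - e - d by omega,
      show ((C - e : ℕ):ℤ) = (C:ℤ) - e by omega]
  · rw [gaussG_neg (by omega : (P:ℤ) - e < 0)]
    apply Finset.sum_eq_zero
    intro d hd
    rw [gaussG_neg (by omega : (P:ℤ) - e - d < 0)]
    ring

end AuxBI

namespace AuxBI
variable {q : ℚ}

lemma saal (hq : 2 ≤ q) (A C P : ℕ) :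
    ∑ d ∈ Finset.range (P+1),
        q ^ ((d:ℤ) * ((C:ℤ) - P + d)) * gaussG q d ((A:ℤ) - C) *
          (gaussG q ((P:ℤ) - d) C * gaussG q A ((A:ℤ) + P - d + 1))
      = gaussG q P ((C:ℤ) + P + 1) * gaussG q ((A:ℤ) - P) ((A:ℤ) + 1) := by
  have h1 : ∀ d ∈ Finset.range (P+1),
      q ^ ((d:ℤ) * ((C:ℤ) - P + d)) * gaussG q d ((A:ℤ) - C) *
          (gaussG q ((P:ℤ) - d) C * gaussG q A ((A:ℤ) + P - d + 1))
        = ∑ e ∈ Finset.range (A+1), q ^ ((e:ℤ) * (1 + e)) *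
            (gaussG q ((A:ℤ) - e) ((A:ℤ) + 1) * (gaussG q e C *
              (q ^ ((d:ℤ) * ((C:ℤ) - P + d)) * gaussG q d ((A:ℤ) - C) *
                gaussG q ((P:ℤ) - e - d) ((C:ℤ) - e)))) := by
    intro d hd
    simp only [Finset.mem_range] at hd
    rw [show (A:ℤ) + P - d + 1 = ((P:ℤ) - d) + ((A+1:ℕ):ℤ) by push_cast; ring,
      ← vandermonde hq (A+1) A ((P:ℤ) - d)]
    simp only [Finset.mul_sum]
    apply Finset.sum_congr rfl
    intro e he
    have htri := tri hq C e (by omega : (0:ℤ) ≤ (P:ℤ) - d)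
    rw [show ((P:ℤ) - d - e) = (P:ℤ) - e - d by ring] at htri
    rw [show ((A+1:ℕ):ℤ) = (A:ℤ) + 1 by push_cast; ring,
      show (A:ℤ) + 1 - (A:ℤ) + (e:ℤ) = 1 + e by ring]
    linear_combination (q ^ ((d:ℤ) * ((C:ℤ) - P + d)) * gaussG q (d:ℤ) ((A:ℤ) - C) *
      (q ^ ((e:ℤ) * (1 + (e:ℤ))) * gaussG q ((A:ℤ) - e) ((A:ℤ) + 1))) * htri
  rw [Finset.sum_congr rfl h1, Finset.sum_comm]
  have h2 : ∀ e ∈ Finset.range (A+1),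
      ∑ d ∈ Finset.range (P+1), q ^ ((e:ℤ) * (1 + e)) *
          (gaussG q ((A:ℤ) - e) ((A:ℤ) + 1) * (gaussG q e C *
            (q ^ ((d:ℤ) * ((C:ℤ) - P + d)) * gaussG q d ((A:ℤ) - C) *
              gaussG q ((P:ℤ) - e - d) ((C:ℤ) - e))))
        = q ^ ((e:ℤ) * (1 + e)) * (gaussG q ((A:ℤ) - e) ((A:ℤ) + 1) * (gaussG q e C *
            gaussG q ((P:ℤ) - e) ((A:ℤ) - e))) := by
    intro e he
    simp only [← Finset.mul_sum]
    rcases le_or_gt e C with heC | heC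
    · rw [inner_sum hq A C P e heC]
    · rw [gaussG_zero_of_lt hq (by positivity : (0:ℤ) ≤ (C:ℤ)) (by exact_mod_cast heC)]
      ring
  rw [Finset.sum_congr rfl h2]
  rcases le_or_gt P A with hPA | hPA
  · have h3 : ∀ e ∈ Finset.range (A+1),
        q ^ ((e:ℤ) * (1 + e)) * (gaussG q ((A:ℤ) - e) ((A:ℤ) + 1) * (gaussG q e C *
            gaussG q ((P:ℤ) - e) ((A:ℤ) - e)))
          = (q ^ ((e:ℤ) * (1 + e)) * gaussG q e C * gaussG q ((P:ℤ) - e) ((P:ℤ) + 1)) *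
              gaussG q ((A:ℤ) - P) ((A:ℤ) + 1) := by
      intro e he
      simp only [Finset.mem_range] at he
      have hstep := step5 hq (show e ≤ A by omega) hPA
      linear_combination (q ^ ((e:ℤ) * (1 + (e:ℤ))) * gaussG q (e:ℤ) (C:ℤ)) * hstep
    rw [Finset.sum_congr rfl h3, ← Finset.sum_mul]
    have hsub : Finset.range (P+1) ⊆ Finset.range (A+1) := Finset.range_subset_range.mpr (by omega)
    rw [← Finset.sum_subset hsub (by
      intro e he hne
      simp only [Finset.mem_range] at he hne
      rw [gaussG_neg (by omega : (P:ℤ) - e < 0)]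
      ring)]
    have hvan := vandermonde hq (P+1) P (C:ℤ)
    rw [show ((C:ℤ) + ((P+1:ℕ):ℤ)) = (C:ℤ) + P + 1 by push_cast; ring] at hvan
    rw [← hvan]
    congr 1
    apply Finset.sum_congr rfl
    intro e he
    rw [show ((P+1:ℕ):ℤ) - (P:ℤ) + (e:ℤ) = 1 + e by push_cast; ring,
      show ((P+1:ℕ):ℤ) = (P:ℤ) + 1 by push_cast; ring]
  · rw [gaussG_neg (by omega : (A:ℤ) - P < 0), mul_zero]
    apply Finset.sum_eq_zero
    intro e he
    simp only [Finset.mem_range] at he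
    rw [gaussG_zero_of_lt hq (by omega : (0:ℤ) ≤ (A:ℤ) - e) (by omega : (A:ℤ) - e < (P:ℤ) - e)]
    ring

end AuxBI


/-- Closed-form family `B^{(n)}(a,b)`, the cardinality of the Grassmannian of submodules
of dimension vector `(a,b)` of the preinjective Kronecker module `I_n`. -/
noncomputable def BI (q : ℚ) (n : ℕ) (a b : ℤ) : ℚ :=
  if a > (n : ℤ) ∨ b > (n : ℤ) + 1 then 0
  else if a = (n : ℤ) ∧ b = (n : ℤ) + 1 then 1
  else gaussG q (a - b) ((n : ℤ) - b) * gaussG q b (a + 1)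

open AuxBI in
theorem BI_recursion (q : ℚ) (hq : 2 ≤ q) (n : ℕ) (hn : 1 ≤ n) (a b : ℤ)
    (ha : a ≤ (n : ℤ)) (hb : b ≤ (n : ℤ) + 1) (ha' : a < (n : ℤ)) :
    (Function.support fun d : ℤ =>
        q ^ (d * ((n : ℤ) - 1 - 2 * a + b + d)) * gaussG q d (2 * a - (n : ℤ) + 1) *
          BI q (n - 1) (2 * a - b - d) a).Finite ∧
      BI q n a b =
        ∑ᶠ d : ℤ, q ^ (d * ((n : ℤ) - 1 - 2 * a + b + d)) * gaussG q d (2 * a - (n : ℤ) + 1) *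
          BI q (n - 1) (2 * a - b - d) a := by
  have hn1 : ((n - 1 : ℕ) : ℤ) = (n : ℤ) - 1 := by omega
  set f : ℤ → ℚ := fun d : ℤ =>
    q ^ (d * ((n : ℤ) - 1 - 2 * a + b + d)) * gaussG q d (2 * a - (n : ℤ) + 1) *
      BI q (n - 1) (2 * a - b - d) a with hf
  have hBIin : ∀ d : ℤ, BI q (n-1) (2*a - b - d) a =
      if (n:ℤ) - 1 < 2*a - b - d then 0
      else gaussG q (a - b - d) ((n:ℤ) - 1 - a) * gaussG q a (2*a - b - d + 1) := by
    intro d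
    simp only [BI, hn1]
    by_cases hgd : (n:ℤ) - 1 < 2*a - b - d
    · rw [if_pos (Or.inl hgd), if_pos hgd]
    · rw [if_neg (by omega : ¬(2*a - b - d > (n:ℤ) - 1 ∨ a > (n:ℤ) - 1 + 1)),
        if_neg (by omega : ¬(2*a - b - d = (n:ℤ) - 1 ∧ a = (n:ℤ) - 1 + 1)), if_neg hgd,
        show 2*a - b - d - a = a - b - d by ring]
  have hLHS : BI q n a b = gaussG q (a-b) ((n:ℤ)-b) * gaussG q b (a+1) := by
    simp only [BI]
    rw [if_neg (by omega : ¬(a > (n:ℤ) ∨ b > (n:ℤ) + 1)),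
      if_neg (by omega : ¬(a = (n:ℤ) ∧ b = (n:ℤ) + 1))]
  rcases le_or_gt b a with hab | hab
  · rcases le_or_gt 0 a with ha0 | ha0
    · -- main case
      have hA : ((a.toNat : ℕ) : ℤ) = a := Int.toNat_of_nonneg ha0
      have hC : ((((n:ℤ)-1-a).toNat : ℕ) : ℤ) = (n:ℤ)-1-a := Int.toNat_of_nonneg (by omega)
      have hP : (((a-b).toNat : ℕ) : ℤ) = a-b := Int.toNat_of_nonneg (by omega)
      set A := a.toNat
      set C := ((n:ℤ)-1-a).toNat
      set P := (a-b).toNat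
      have hfz : ∀ d : ℤ, (d < 0 ∨ (P:ℤ) < d) → f d = 0 := by
        intro d hd
        rcases hd with hd | hd
        · simp only [hf]; rw [gaussG_neg hd, mul_zero, zero_mul]
        · simp only [hf]
          rw [hBIin d, if_neg (by omega : ¬((n:ℤ) - 1 < 2*a - b - d)),
            gaussG_neg (by omega : a - b - d < 0), zero_mul, mul_zero]
      set s : Finset ℤ := (Finset.range (P+1)).image (fun i : ℕ => (i:ℤ)) with hs
      have hsupp : Function.support f ⊆ ↑s := by
        intro d hd
        by_contra hns
        apply hd
        apply hfz
        by_contra hcon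
        push_neg at hcon
        apply hns
        simp only [hs, Finset.coe_image, Set.mem_image, Finset.mem_coe, Finset.mem_range]
        exact ⟨d.toNat, by omega, by omega⟩
      refine ⟨Set.Finite.subset s.finite_toSet hsupp, ?_⟩
      rw [hLHS]
      have hsum : ∑ᶠ d : ℤ, f d = ∑ d ∈ s, f d := finsum_eq_sum_of_support_subset f hsupp
      rw [hsum, hs, Finset.sum_image (by intro x _ y _ h; simpa using h)]
      have hterm : ∀ i ∈ Finset.range (P+1), f (i:ℤ)
          = q ^ ((i:ℤ) * ((C:ℤ) - P + i)) * gaussG q i ((A:ℤ) - C) *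
              (gaussG q ((P:ℤ) - i) C * gaussG q A ((A:ℤ) + P - i + 1)) := by
        intro i hi
        simp only [Finset.mem_range] at hi
        simp only [hf]
        rw [hBIin (i:ℤ)]
        rw [show (n:ℤ) - 1 - 2*a + b + i = (C:ℤ) - P + i by omega,
          show 2*a - (n:ℤ) + 1 = (A:ℤ) - C by omega]
        by_cases hgd : (n:ℤ) - 1 < 2*a - b - i
        · rw [if_pos hgd,
            gaussG_zero_of_lt hq (by positivity : (0:ℤ) ≤ (C:ℤ)) (by omega : (C:ℤ) < (P:ℤ) - i)]
          ring
        · rw [if_neg hgd,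
            show a - b - (i:ℤ) = (P:ℤ) - i by omega,
            show (n:ℤ) - 1 - a = (C:ℤ) by omega,
            show 2*a - b - (i:ℤ) + 1 = (A:ℤ) + P - i + 1 by omega,
            show a = ((A:ℕ):ℤ) by omega]
      rw [Finset.sum_congr rfl hterm, saal hq A C P]
      rw [show (a - b) = ((P:ℕ):ℤ) by omega, show (n:ℤ) - b = (C:ℤ) + P + 1 by omega,
        show b = ((A:ℕ):ℤ) - P by omega, show a + 1 = ((A:ℕ):ℤ) + 1 by omega]
    · -- a < 0 (and b ≤ a)
      have hfzero : ∀ d : ℤ, f d = 0 := by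
        intro d
        rcases le_or_gt 0 d with hd | hd
        · simp only [hf]
          rw [hBIin d]
          by_cases hgd : (n:ℤ) - 1 < 2*a - b - d
          · rw [if_pos hgd, mul_zero]
          · rw [if_neg hgd, gaussG_neg (by omega : a < 0), mul_zero, mul_zero]
        · simp only [hf]
          rw [gaussG_neg hd, mul_zero, zero_mul]
      have hfe : f = fun _ => (0:ℚ) := funext hfzero
      refine ⟨by rw [hfe]; simp, ?_⟩
      rw [hLHS, gaussG_neg (by omega : b < 0), mul_zero, hfe]
      simp
  · -- a < b
    have hfzero : ∀ d : ℤ, f d = 0 := by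
      intro d
      rcases le_or_gt 0 d with hd | hd
      · simp only [hf]
        rw [hBIin d]
        by_cases hgd : (n:ℤ) - 1 < 2*a - b - d
        · rw [if_pos hgd, mul_zero]
        · rw [if_neg hgd, gaussG_neg (by omega : a - b - d < 0), zero_mul, mul_zero]
      · simp only [hf]
        rw [gaussG_neg hd, mul_zero, zero_mul]
    have hfe : f = fun _ => (0:ℚ) := funext hfzero
    refine ⟨by rw [hfe]; simp, ?_⟩
    rw [hLHS, gaussG_neg (by omega : a - b < 0), zero_mul, hfe]
    simp
end
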